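/- arXiv:1905.10899 — 8 statements merged into one kernel-verified Lean document; each statement's English description precedes it below -/
import Mathlib

section
/- Consider the SimGD-O iteration z_{k+1} = z_k − αG(z_k) − β(G(z_k) − G(z_{k−1})) with z_{−1} = z₀, with the choices α = 1/(8R) and β = 2α = 1/(4R). Then for every k ≥ 1, min_{i=0,…,k} ‖G(z_i)‖² ≤ (136 R²/k) ‖z₀ + βG(z₀) − z_⋆‖² ≤ (289 R²/k) ‖z₀ − z_⋆‖², where z_⋆ is any saddle point of L. -/
/-
At a saddle point `z⋆`, the first-order conditions of convexity in `x` and concavity in `u` give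
`⟪G z, z - z⋆⟫ ≥ 0` for every `z`. Along SimGD-O with `β = 2α` and `αR ≤ 1/8`, the energy
`V k = ‖z k + 2α G(z (k-1)) - z⋆‖² + ‖z k - z (k-1)‖² / 28` then drops by at least
`(13/14) α² ‖G (z k)‖²` per step. Telescoping and averaging give
`min_{i<k} ‖G (z i)‖² ≤ 14 V 0 / (13 α² k) = 896 R² V 0 / (13 k) ≤ 136 R² V 0 / k`, where
`V 0 = ‖z 0 + β G (z 0) - z⋆‖²`. Finally `‖a + b‖² ≤ 2‖a‖² + 2‖b‖²` together with
`‖β G (z 0)‖ ≤ βR ‖z 0 - z⋆‖ = ‖z 0 - z⋆‖ / 4` bounds `V 0` by `(17/8) ‖z 0 - z⋆‖²`,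
and `136 · 17/8 = 289`.
-/

open Filter Topology

variable {m n : ℕ}

noncomputable def prodNormSq {E F : Type*} [NormedAddCommGroup E] [NormedAddCommGroup F]
    (z : E × F) : ℝ :=
  ‖z.1‖ ^ 2 + ‖z.2‖ ^ 2

/-- The saddle-point (gradient-descent-ascent) operator
`G(x,u) = (∇ₓ L(x,u), −∇ᵤ L(x,u))` of a differentiable function `L`. -/
noncomputable def saddleGrad
    (L : EuclideanSpace ℝ (Fin m) × EuclideanSpace ℝ (Fin n) → ℝ)
    (z : EuclideanSpace ℝ (Fin m) × EuclideanSpace ℝ (Fin n)) :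
    EuclideanSpace ℝ (Fin m) × EuclideanSpace ℝ (Fin n) :=
  (gradient (fun x => L (x, z.2)) z.1, -gradient (fun u => L (z.1, u)) z.2)

def IsSaddlePoint
    (L : EuclideanSpace ℝ (Fin m) × EuclideanSpace ℝ (Fin n) → ℝ)
    (zstar : EuclideanSpace ℝ (Fin m) × EuclideanSpace ℝ (Fin n)) : Prop :=
  ∀ x u, L (zstar.1, u) ≤ L zstar ∧ L zstar ≤ L (x, zstar.2)

open scoped RealInnerProductSpace

section FirstOrder

variable {E : Type*} [NormedAddCommGroup E] [NormedSpace ℝ E] {f : E → ℝ} {x : E}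

theorem ConvexOn.add_fderiv_sub_le (hf : ConvexOn ℝ Set.univ f) (hd : DifferentiableAt ℝ f x)
    (y : E) : f x + fderiv ℝ f x (y - x) ≤ f y := by
  set φ : ℝ → ℝ := f ∘ AffineMap.lineMap x y
  have hφ : ConvexOn ℝ Set.univ φ := by simpa using hf.comp_affineMap (AffineMap.lineMap x y)
  have hline : HasDerivAt (AffineMap.lineMap x y : ℝ → E) (y - x) 0 := by
    simpa using AffineMap.hasDerivAt_lineMap
  have hder : HasDerivAt φ (fderiv ℝ f x (y - x)) 0 := by
    have hd' : HasFDerivAt f (fderiv ℝ f x) (AffineMap.lineMap x y (0 : ℝ)) := by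
      simpa using hd.hasFDerivAt
    exact hd'.comp_hasDerivAt 0 hline
  have := hφ.deriv_le_slope (Set.mem_univ 0) (Set.mem_univ 1) zero_lt_one hder.differentiableAt
  simp only [hder.deriv, slope_def_field, φ, Function.comp_apply, AffineMap.lineMap_apply_zero,
    AffineMap.lineMap_apply_one, sub_zero, div_one] at this
  linarith

theorem ConcaveOn.le_add_fderiv_sub (hf : ConcaveOn ℝ Set.univ f) (hd : DifferentiableAt ℝ f x)
    (y : E) : f y ≤ f x + fderiv ℝ f x (y - x) := by
  have := hf.neg.add_fderiv_sub_le hd.neg y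
  simp only [Pi.neg_apply, fderiv_neg, neg_apply] at this
  linarith

end FirstOrder

theorem Finset.exists_lt_le_div_of_sum_range_le {f : ℕ → ℝ} {B : ℝ} {k : ℕ} (hk : 0 < k)
    (h : ∑ i ∈ Finset.range k, f i ≤ B) : ∃ i < k, f i ≤ B / k := by
  have hsum : ∑ i ∈ Finset.range k, f i ≤ ∑ _i ∈ Finset.range k, B / k := by
    rwa [Finset.sum_const, Finset.card_range, nsmul_eq_mul, mul_div_cancel₀ _ (by positivity)]
  obtain ⟨i, hi, hle⟩ := Finset.exists_le_of_sum_le (Finset.nonempty_range_iff.mpr hk.ne') hsum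
  exact ⟨i, Finset.mem_range.mp hi, hle⟩

theorem norm_add_smul_sub_sq_le {V : Type*} [SeminormedAddCommGroup V] [NormedSpace ℝ V]
    {G : V → V} {R : ℝ} (β : ℝ) (hLip : ∀ x y, ‖G x - G y‖ ^ 2 ≤ R ^ 2 * ‖x - y‖ ^ 2)
    {zstar : V} (hGzstar : G zstar = 0) (x : V) :
    ‖x + β • G x - zstar‖ ^ 2 ≤ 2 * (1 + β ^ 2 * R ^ 2) * ‖x - zstar‖ ^ 2 := by
  have hsplit : x + β • G x - zstar = (x - zstar) + β • (G x - G zstar) := by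
    rw [hGzstar, sub_zero]; abel
  have hG : ‖β • (G x - G zstar)‖ ^ 2 ≤ β ^ 2 * R ^ 2 * ‖x - zstar‖ ^ 2 := by
    rw [norm_smul, mul_pow, Real.norm_eq_abs, sq_abs, mul_assoc]
    exact mul_le_mul_of_nonneg_left (hLip x zstar) (sq_nonneg β)
  calc ‖x + β • G x - zstar‖ ^ 2
      ≤ (‖x - zstar‖ + ‖β • (G x - G zstar)‖) ^ 2 := by
        rw [hsplit]; gcongr; exact norm_add_le _ _
    _ ≤ 2 * (‖x - zstar‖ ^ 2 + ‖β • (G x - G zstar)‖ ^ 2) := add_sq_le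
    _ ≤ 2 * (1 + β ^ 2 * R ^ 2) * ‖x - zstar‖ ^ 2 := by linarith

section Optimistic

variable {H : Type*} [NormedAddCommGroup H] [InnerProductSpace ℝ H]

-- The weights `13/14` and `1/28` make the `‖g‖²` terms cancel exactly, while the
-- `‖g - gprev‖²` terms, of total weight `16α²/7`, are paid for by `‖z - zprev‖² / 28`.
theorem optimistic_energy_step {α R : ℝ} (hα : 0 ≤ α) (hαR : α ^ 2 * R ^ 2 ≤ 1 / 64)
    {z z' zprev g gprev zstar : H} (hz' : z' = z - α • g - (2 * α) • (g - gprev))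
    (hg : 0 ≤ ⟪g, z - zstar⟫) (hlip : ‖g - gprev‖ ^ 2 ≤ R ^ 2 * ‖z - zprev‖ ^ 2) :
    13 / 14 * α ^ 2 * ‖g‖ ^ 2 + (‖z' + (2 * α) • g - zstar‖ ^ 2 + 1 / 28 * ‖z' - z‖ ^ 2)
      ≤ ‖z + (2 * α) • gprev - zstar‖ ^ 2 + 1 / 28 * ‖z - zprev‖ ^ 2 := by
  set A := z + (2 * α) • gprev - zstar
  set D := ‖g - gprev‖ ^ 2
  have hanchor : ‖z' + (2 * α) • g - zstar‖ ^ 2 ≤ ‖A‖ ^ 2 - α ^ 2 * ‖g‖ ^ 2 + 2 * α ^ 2 * D := by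
    have hA : z' + (2 * α) • g - zstar = A - α • g := by rw [hz']; module
    have hinner : ⟪A, α • g⟫ = α * ⟪g, z - zstar⟫ + α ^ 2 * (2 * ⟪gprev, g⟫) := by
      simp only [A, real_inner_smul_right, inner_sub_left, inner_add_left, inner_sub_right,
        real_inner_comm g]
      ring
    have hpolar : 2 * ⟪gprev, g⟫ = ‖gprev‖ ^ 2 + ‖g‖ ^ 2 - D := by
      simp only [D, norm_sub_sq_real, real_inner_comm g]; ring
    rw [hA, norm_sub_sq_real, hinner, hpolar, norm_smul, mul_pow, Real.norm_eq_abs, sq_abs]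
    nlinarith [mul_nonneg hα hg, mul_nonneg (sq_nonneg α) (sq_nonneg ‖gprev‖)]
  have hmove : ‖z' - z‖ ^ 2 ≤ 2 * α ^ 2 * ‖g‖ ^ 2 + 8 * α ^ 2 * D := by
    have hdiff : z' - z = -(α • g + (2 * α) • (g - gprev)) := by rw [hz']; module
    rw [hdiff, norm_neg]
    refine (pow_le_pow_left₀ (norm_nonneg _) (norm_add_le _ _) 2).trans (add_sq_le.trans ?_)
    simp only [norm_smul, mul_pow, Real.norm_eq_abs, sq_abs, D]
    linarith
  have hD : α ^ 2 * D ≤ 1 / 64 * ‖z - zprev‖ ^ 2 :=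
    calc α ^ 2 * D ≤ α ^ 2 * (R ^ 2 * ‖z - zprev‖ ^ 2) := by gcongr
      _ = α ^ 2 * R ^ 2 * ‖z - zprev‖ ^ 2 := by ring
      _ ≤ 1 / 64 * ‖z - zprev‖ ^ 2 := by gcongr
  linarith

theorem optimistic_sum_norm_sq_le {G : H → H} {R α : ℝ} (hα : 0 ≤ α)
    (hαR : α ^ 2 * R ^ 2 ≤ 1 / 64) (hLip : ∀ x y, ‖G x - G y‖ ^ 2 ≤ R ^ 2 * ‖x - y‖ ^ 2)
    {zstar : H} (hzstar : ∀ x, 0 ≤ ⟪G x, x - zstar⟫) {z : ℕ → H}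
    (hiter : ∀ k, z (k + 1) = z k - α • G (z k) - (2 * α) • (G (z k) - G (z (k - 1))))
    (K : ℕ) :
    ∑ i ∈ Finset.range K, 13 / 14 * α ^ 2 * ‖G (z i)‖ ^ 2
      ≤ ‖z 0 + (2 * α) • G (z 0) - zstar‖ ^ 2 := by
  set V : ℕ → ℝ := fun k =>
    ‖z k + (2 * α) • G (z (k - 1)) - zstar‖ ^ 2 + 1 / 28 * ‖z k - z (k - 1)‖ ^ 2
  have hstep (i : ℕ) : 13 / 14 * α ^ 2 * ‖G (z i)‖ ^ 2 ≤ V i - V (i + 1) := by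
    have := optimistic_energy_step hα hαR (hiter i) (hzstar (z i)) (hLip (z i) (z (i - 1)))
    simp only [V, Nat.add_sub_cancel]
    linarith
  calc ∑ i ∈ Finset.range K, 13 / 14 * α ^ 2 * ‖G (z i)‖ ^ 2
      ≤ ∑ i ∈ Finset.range K, (V i - V (i + 1)) := Finset.sum_le_sum fun i _ => hstep i
    _ = V 0 - V K := Finset.sum_range_sub' V K
    _ ≤ V 0 := sub_le_self _ (by positivity)
    _ = ‖z 0 + (2 * α) • G (z 0) - zstar‖ ^ 2 := by simp [V]

end Optimistic

theorem WithLp.norm_toLp_sq_eq_prodNormSq {E F : Type*} [NormedAddCommGroup E]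
    [NormedAddCommGroup F] (z : E × F) : ‖WithLp.toLp 2 z‖ ^ 2 = prodNormSq z :=
  WithLp.prod_norm_sq_eq_of_L2 _

section Saddle

variable {L : EuclideanSpace ℝ (Fin m) × EuclideanSpace ℝ (Fin n) → ℝ}
  {zstar : EuclideanSpace ℝ (Fin m) × EuclideanSpace ℝ (Fin n)} {R : ℝ}

-- On `WithLp 2`, `prodNormSq` becomes the squared norm and the inner product is the sum of the
-- componentwise ones, so the Hilbert-space results above apply to this copy of `saddleGrad`.
noncomputable def saddleGradL2 (L : EuclideanSpace ℝ (Fin m) × EuclideanSpace ℝ (Fin n) → ℝ)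
    (p : WithLp 2 (EuclideanSpace ℝ (Fin m) × EuclideanSpace ℝ (Fin n))) :
    WithLp 2 (EuclideanSpace ℝ (Fin m) × EuclideanSpace ℝ (Fin n)) :=
  WithLp.toLp 2 (saddleGrad L p.ofLp)

theorem norm_saddleGradL2_sub_sq_le
    (hLip : ∀ z w, prodNormSq (saddleGrad L z - saddleGrad L w) ≤ R ^ 2 * prodNormSq (z - w))
    (p q : WithLp 2 (EuclideanSpace ℝ (Fin m) × EuclideanSpace ℝ (Fin n))) :
    ‖saddleGradL2 L p - saddleGradL2 L q‖ ^ 2 ≤ R ^ 2 * ‖p - q‖ ^ 2 := by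
  have := hLip p.ofLp q.ofLp
  rwa [← WithLp.norm_toLp_sq_eq_prodNormSq, ← WithLp.norm_toLp_sq_eq_prodNormSq] at this

theorem IsSaddlePoint.saddleGrad_eq_zero (hzstar : IsSaddlePoint L zstar) :
    saddleGrad L zstar = 0 := by
  have hmin : IsLocalMin (fun x => L (x, zstar.2)) zstar.1 :=
    .of_forall fun x => (hzstar x zstar.2).2
  have hmax : IsLocalMax (fun u => L (zstar.1, u)) zstar.2 :=
    .of_forall fun u => (hzstar zstar.1 u).1
  simp [saddleGrad, gradient, hmin.fderiv_eq_zero, hmax.fderiv_eq_zero]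

theorem IsSaddlePoint.inner_saddleGrad_nonneg (hzstar : IsSaddlePoint L zstar)
    (hDiff : Differentiable ℝ L) (hConv : ∀ u, ConvexOn ℝ Set.univ fun x => L (x, u))
    (hConc : ∀ x, ConcaveOn ℝ Set.univ fun u => L (x, u))
    (z : EuclideanSpace ℝ (Fin m) × EuclideanSpace ℝ (Fin n)) :
    0 ≤ ⟪(saddleGrad L z).1, z.1 - zstar.1⟫ + ⟪(saddleGrad L z).2, z.2 - zstar.2⟫ := by
  have hx := (hConv z.2).add_fderiv_sub_le (x := z.1) (by fun_prop) zstar.1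
  have hu := (hConc z.1).le_add_fderiv_sub (x := z.2) (by fun_prop) zstar.2
  obtain ⟨hmax, hmin⟩ := hzstar z.1 z.2
  simp only [saddleGrad, inner_neg_left, inner_gradient_left, ← neg_sub zstar.1, ← neg_sub zstar.2,
    map_neg] at hx hu ⊢
  linarith

theorem IsSaddlePoint.sum_prodNormSq_saddleGrad_le (hzstar : IsSaddlePoint L zstar)
    (hDiff : Differentiable ℝ L) (hConv : ∀ u, ConvexOn ℝ Set.univ fun x => L (x, u))
    (hConc : ∀ x, ConcaveOn ℝ Set.univ fun u => L (x, u))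
    (hLip : ∀ z w, prodNormSq (saddleGrad L z - saddleGrad L w) ≤ R ^ 2 * prodNormSq (z - w))
    {α : ℝ} (hα : 0 ≤ α) (hαR : α ^ 2 * R ^ 2 ≤ 1 / 64)
    {z : ℕ → EuclideanSpace ℝ (Fin m) × EuclideanSpace ℝ (Fin n)}
    (hiter : ∀ k, z (k + 1) = z k - α • saddleGrad L (z k)
      - (2 * α) • (saddleGrad L (z k) - saddleGrad L (z (k - 1)))) (K : ℕ) :
    ∑ i ∈ Finset.range K, 13 / 14 * α ^ 2 * prodNormSq (saddleGrad L (z i))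
      ≤ prodNormSq (z 0 + (2 * α) • saddleGrad L (z 0) - zstar) := by
  simpa only [saddleGradL2, ← WithLp.toLp_smul, ← WithLp.toLp_add, ← WithLp.toLp_sub,
    WithLp.norm_toLp_sq_eq_prodNormSq] using
    optimistic_sum_norm_sq_le (z := fun k => WithLp.toLp 2 (z k)) hα hαR
      (norm_saddleGradL2_sub_sq_le hLip)
      (fun p => hzstar.inner_saddleGrad_nonneg hDiff hConv hConc p.ofLp)
      (fun k => by rw [hiter k]; rfl) K

theorem IsSaddlePoint.prodNormSq_add_smul_saddleGrad_sub_le (hzstar : IsSaddlePoint L zstar)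
    (hLip : ∀ z w, prodNormSq (saddleGrad L z - saddleGrad L w) ≤ R ^ 2 * prodNormSq (z - w))
    (β : ℝ) (z : EuclideanSpace ℝ (Fin m) × EuclideanSpace ℝ (Fin n)) :
    prodNormSq (z + β • saddleGrad L z - zstar)
      ≤ 2 * (1 + β ^ 2 * R ^ 2) * prodNormSq (z - zstar) := by
  have hzero : saddleGradL2 L (WithLp.toLp 2 zstar) = 0 := by
    simp [saddleGradL2, hzstar.saddleGrad_eq_zero]
  simpa only [saddleGradL2, ← WithLp.toLp_smul, ← WithLp.toLp_add, ← WithLp.toLp_sub,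
    WithLp.norm_toLp_sq_eq_prodNormSq] using
    norm_add_smul_sub_sq_le β (norm_saddleGradL2_sub_sq_le hLip) hzero (WithLp.toLp 2 z)

end Saddle

-- `z (0 - 1) = z 0` by truncated subtraction: this encodes `z₋₁ = z₀`.
/-- Corollary 1: SimGD-O with `α = 1/(8R)` and `β = 2α = 1/(4R)` satisfies, for every `k ≥ 1`,
`min_{i≤k} ‖G(z_i)‖² ≤ (136R²/k)‖z₀ + βG(z₀) − z⋆‖² ≤ (289R²/k)‖z₀ − z⋆‖²`.
(Natural-number subtraction gives `z (0−1) = z 0`, the convention `z_{−1} = z₀`.) -/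
theorem stmt_2
    (L : EuclideanSpace ℝ (Fin m) × EuclideanSpace ℝ (Fin n) → ℝ)
    (R : ℝ) (hR : 0 < R)
    (hDiff : Differentiable ℝ L)
    (hConv : ∀ u, ConvexOn ℝ Set.univ fun x => L (x, u))
    (hConc : ∀ x, ConcaveOn ℝ Set.univ fun u => L (x, u))
    (hLip : ∀ z w, prodNormSq (saddleGrad L z - saddleGrad L w) ≤ R ^ 2 * prodNormSq (z - w))
    (zstar : EuclideanSpace ℝ (Fin m) × EuclideanSpace ℝ (Fin n))
    (hzstar : IsSaddlePoint L zstar)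
    (z : ℕ → EuclideanSpace ℝ (Fin m) × EuclideanSpace ℝ (Fin n))
    (hiter : ∀ k : ℕ, z (k + 1)
      = z k - (1 / (8 * R)) • saddleGrad L (z k)
        - (1 / (4 * R)) • (saddleGrad L (z k) - saddleGrad L (z (k - 1)))) :
    ∀ k : ℕ, 1 ≤ k →
      (∃ i ≤ k,
        prodNormSq (saddleGrad L (z i))
          ≤ 136 * R ^ 2 / (k : ℝ)
            * prodNormSq (z 0 + (1 / (4 * R)) • saddleGrad L (z 0) - zstar)) ∧
      136 * R ^ 2 / (k : ℝ)
          * prodNormSq (z 0 + (1 / (4 * R)) • saddleGrad L (z 0) - zstar)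
        ≤ 289 * R ^ 2 / (k : ℝ) * prodNormSq (z 0 - zstar) := by
  intro k hk
  have hβ : 1 / (4 * R) = 2 * (1 / (8 * R)) := by field_simp; ring
  have hαR : (1 / (8 * R)) ^ 2 * R ^ 2 = 1 / 64 := by field_simp; ring
  rw [hβ] at hiter ⊢
  set α := 1 / (8 * R)
  obtain ⟨i, hik, hi⟩ := Finset.exists_lt_le_div_of_sum_range_le hk
    (hzstar.sum_prodNormSq_saddleGrad_le hDiff hConv hConc hLip (by positivity) hαR.le hiter k)
  have hstart := hzstar.prodNormSq_add_smul_saddleGrad_sub_le hLip (2 * α) (z 0)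
  rw [show 2 * (1 + (2 * α) ^ 2 * R ^ 2) = 17 / 8 by linear_combination 8 * hαR] at hstart
  set P := prodNormSq (z 0 + (2 * α) • saddleGrad L (z 0) - zstar)
  have hRkP : 0 ≤ R ^ 2 / k * P := mul_nonneg (by positivity) (by unfold P prodNormSq; positivity)
  refine ⟨⟨i, hik.le, ?_⟩, ?_⟩
  · calc prodNormSq (saddleGrad L (z i))
        = 896 / 13 * R ^ 2 * (13 / 14 * α ^ 2 * prodNormSq (saddleGrad L (z i))) := by
          linear_combination (-64 * prodNormSq (saddleGrad L (z i))) * hαR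
      _ ≤ 896 / 13 * R ^ 2 * (P / k) := by gcongr
      _ = 896 / 13 * (R ^ 2 / k * P) := by ring
      _ ≤ 136 * (R ^ 2 / k * P) := by gcongr; norm_num
      _ = 136 * R ^ 2 / k * P := by ring
  · calc 136 * R ^ 2 / k * P ≤ 136 * R ^ 2 / k * (17 / 8 * prodNormSq (z 0 - zstar)) := by gcongr
      _ = 289 * R ^ 2 / k * prodNormSq (z 0 - zstar) := by ring
end

section
/- For every real p ∈ (0,1) and every integer k ≥ 1, 0 ≤ p/(k(k+1)) − ((k+1)^p − k^p)/(k^p (k+1)) ≤ p(1−p)/(2k³). -/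
/-!
With `t = 1/k` the quantity equals `(p t - ((1 + t)^p - 1)) / (k + 1)`, so both bounds are
Taylor bounds for `(1 + t)^p` at `t = 0`: Bernoulli's inequality `(1 + t)^p ≤ 1 + p t` gives
the lower one, and the second-order bound `(1 + t)^p ≥ 1 + p t - p(1-p) t²/2`, obtained by
integrating the first-order bound `(1 + t)^(p-1) ≥ 1 - (1-p) t` for the derivative, gives
`≤ p(1-p)/(2k²(k+1)) ≤ p(1-p)/(2k³)`.
-/

open Real Set

lemma one_sub_mul_le_one_add_rpow_neg {s t : ℝ} (hs0 : 0 ≤ s) (hs1 : s ≤ 1) (ht : 0 ≤ t) :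
    1 - s * t ≤ (1 + t) ^ (-s) := by
  have h1t : 0 < 1 + t := by linarith
  rcases le_or_gt (1 - s * t) 0 with h | h
  · exact h.trans (rpow_nonneg h1t.le _)
  have hpos : 0 < (1 + t) ^ s := rpow_pos_of_pos h1t s
  have hbern : (1 + t) ^ s ≤ 1 + s * t :=
    rpow_one_add_le_one_add_mul_self (by linarith) hs0 hs1
  rw [rpow_neg h1t.le, ← one_div, le_div_iff₀ hpos]
  calc (1 - s * t) * (1 + t) ^ s ≤ (1 - s * t) * (1 + s * t) := by gcongr
    _ ≤ 1 := by nlinarith [sq_nonneg (s * t)]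

lemma hasDerivAt_one_add_rpow_sub_taylor (p : ℝ) {x : ℝ} (hx : 0 < 1 + x) :
    HasDerivAt (fun x : ℝ => (1 + x) ^ p - p * x + p * (1 - p) * x ^ 2 / 2)
      (p * (1 + x) ^ (p - 1) - p + p * (1 - p) * x) x := by
  have hpow : HasDerivAt (fun x : ℝ => (1 + x) ^ p) (p * (1 + x) ^ (p - 1)) x := by
    simpa using ((hasDerivAt_id x).const_add 1).rpow_const (p := p) (Or.inl hx.ne')
  have hsq : HasDerivAt (fun x : ℝ => p * (1 - p) * x ^ 2 / 2) (p * (1 - p) * x) x := by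
    refine (((hasDerivAt_pow 2 x).const_mul (p * (1 - p))).div_const 2).congr_deriv ?_
    ring
  exact (hpow.sub ((hasDerivAt_id x).const_mul p |>.congr_deriv (mul_one p))).add hsq

lemma one_add_mul_sub_sq_le_rpow_one_add {p t : ℝ} (hp0 : 0 ≤ p) (hp1 : p ≤ 1) (ht : 0 ≤ t) :
    1 + p * t - p * (1 - p) * t ^ 2 / 2 ≤ (1 + t) ^ p := by
  let g : ℝ → ℝ := fun x => (1 + x) ^ p - p * x + p * (1 - p) * x ^ 2 / 2
  have hderiv : ∀ x ∈ Ici (0 : ℝ), HasDerivAt g (p * (1 + x) ^ (p - 1) - p + p * (1 - p) * x) x :=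
    fun x hx => hasDerivAt_one_add_rpow_sub_taylor p (by simp only [mem_Ici] at hx; linarith)
  have hmono : MonotoneOn g (Ici 0) := by
    refine monotoneOn_of_deriv_nonneg (convex_Ici 0)
      (fun x hx => (hderiv x hx).continuousAt.continuousWithinAt)
      (fun x hx => ?_) (fun x hx => ?_) <;> rw [interior_Ici] at hx
    · exact (hderiv x (mem_Ici.2 hx.le)).differentiableAt.differentiableWithinAt
    · have hx0 : (0 : ℝ) ≤ x := le_of_lt hx
      have hbound := one_sub_mul_le_one_add_rpow_neg (sub_nonneg.2 hp1) (by linarith) hx0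
      rw [neg_sub] at hbound
      rw [(hderiv x (mem_Ici.2 hx0)).deriv]
      nlinarith
  have := hmono self_mem_Ici (mem_Ici.2 ht) ht
  simp only [g, add_zero, one_rpow, mul_zero, sub_zero, ne_eq, OfNat.ofNat_ne_zero,
    not_false_eq_true, zero_pow, zero_div] at this
  linarith

lemma div_mul_add_one_sub_rpow_eq {x : ℝ} (hx : 0 < x) (p : ℝ) :
    p / (x * (x + 1)) - ((x + 1) ^ p - x ^ p) / (x ^ p * (x + 1))
      = (p * x⁻¹ - ((1 + x⁻¹) ^ p - 1)) / (x + 1) := by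
  have hsplit : (x + 1) ^ p = x ^ p * (1 + x⁻¹) ^ p := by
    rw [← mul_rpow hx.le (by positivity), mul_add, mul_one, mul_inv_cancel₀ hx.ne', add_comm]
  have hxp : 0 < x ^ p := rpow_pos_of_pos hx p
  rw [hsplit]
  field_simp

/-- For every real `p ∈ (0,1)` and every integer `k ≥ 1`,
`0 ≤ p/(k(k+1)) − ((k+1)^p − k^p)/(k^p (k+1)) ≤ p(1−p)/(2k³)`. -/
theorem stmt_8 (p : ℝ) (hp0 : 0 < p) (hp1 : p < 1) (k : ℕ) (hk : 1 ≤ k) :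
    0 ≤ p / ((k : ℝ) * ((k : ℝ) + 1))
        - (((k : ℝ) + 1) ^ p - (k : ℝ) ^ p) / ((k : ℝ) ^ p * ((k : ℝ) + 1)) ∧
    p / ((k : ℝ) * ((k : ℝ) + 1))
        - (((k : ℝ) + 1) ^ p - (k : ℝ) ^ p) / ((k : ℝ) ^ p * ((k : ℝ) + 1))
      ≤ p * (1 - p) / (2 * (k : ℝ) ^ 3) := by
  have hk0 : (0 : ℝ) < k := by exact_mod_cast hk
  have ht : (0 : ℝ) ≤ (k : ℝ)⁻¹ := inv_nonneg.2 hk0.le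
  rw [div_mul_add_one_sub_rpow_eq hk0]
  constructor
  · have := rpow_one_add_le_one_add_mul_self (by linarith) hp0.le hp1.le (s := (k : ℝ)⁻¹)
    exact div_nonneg (by linarith) (by positivity)
  · have hsecond := one_add_mul_sub_sq_le_rpow_one_add hp0.le hp1.le ht
    have hpp : 0 ≤ p * (1 - p) := mul_nonneg hp0.le (by linarith)
    calc (p * (k : ℝ)⁻¹ - ((1 + (k : ℝ)⁻¹) ^ p - 1)) / ((k : ℝ) + 1)
        ≤ p * (1 - p) * ((k : ℝ)⁻¹) ^ 2 / 2 / ((k : ℝ) + 1) := by gcongr; linarith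
      _ = p * (1 - p) / (2 * (k : ℝ) ^ 2 * ((k : ℝ) + 1)) := by field_simp
      _ ≤ p * (1 - p) / (2 * (k : ℝ) ^ 3) := by
        apply div_le_div_of_nonneg_left hpp (by positivity)
        nlinarith [sq_nonneg (k : ℝ)]
end

section
/- Let {V_k}_{k≥1} and {U_k}_{k≥1} be nonnegative real sequences satisfying V_{k+1} ≤ (1 − C₁/k^{1−ε} + f(k)) V_k + (C₂/k^{1−ε}) √(V_k) + U_k for all k ≥ 1, where C₁ > 0, C₂ > 0, ε ∈ [0,1), f(k) = o(1/k^{1−ε}) (i.e., k^{1−ε} f(k) → 0 as k → ∞), and Σ_{k=1}^∞ U_k < ∞. Then limsup_{k→∞} V_k ≤ C₂²/C₁². -/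
open Filter Topology Finset

set_option maxHeartbeats 1600000 in
/-- Lemma 7 of the paper: if nonnegative sequences `V, U` satisfy
`V_{k+1} ≤ (1 − C₁/k^{1−ε} + f(k)) V_k + (C₂/k^{1−ε})√V_k + U_k` with `C₁, C₂ > 0`,
`ε ∈ [0,1)`, `f(k) = o(1/k^{1−ε})` and `Σ U_k < ∞`, then `limsup V_k ≤ C₂²/C₁²`. -/
theorem stmt_11 (V U f : ℕ → ℝ) (C₁ C₂ ε : ℝ)
    (hC₁ : 0 < C₁) (hC₂ : 0 < C₂) (hε0 : 0 ≤ ε) (hε1 : ε < 1)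
    (hV : ∀ k, 1 ≤ k → 0 ≤ V k) (hU : ∀ k, 1 ≤ k → 0 ≤ U k)
    (hf : Tendsto (fun k : ℕ => (k : ℝ) ^ (1 - ε) * f k) atTop (𝓝 0))
    (hUsum : Summable U)
    (hrec : ∀ k : ℕ, 1 ≤ k →
      V (k + 1) ≤ (1 - C₁ / (k : ℝ) ^ (1 - ε) + f k) * V k
        + C₂ / (k : ℝ) ^ (1 - ε) * Real.sqrt (V k) + U k) :
    Filter.limsup (fun k : ℕ => V k) atTop ≤ C₂ ^ 2 / C₁ ^ 2 := by
  have h1ε : (0:ℝ) < 1 - ε := by linarith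
  set a : ℕ → ℝ := fun k => ((k:ℝ) ^ (1 - ε))⁻¹ with hadef
  -- basic facts about a
  have hp_pos : ∀ k : ℕ, 1 ≤ k → (0:ℝ) < (k:ℝ) ^ (1 - ε) := by
    intro k hk
    exact Real.rpow_pos_of_pos (by exact_mod_cast Nat.pos_of_ne_zero (by omega)) _
  have hp_one : ∀ k : ℕ, 1 ≤ k → (1:ℝ) ≤ (k:ℝ) ^ (1 - ε) := by
    intro k hk
    have h1k : (1:ℝ) ≤ (k:ℝ) := by exact_mod_cast hk
    calc (1:ℝ) = 1 ^ (1-ε) := (Real.one_rpow _).symm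
    _ ≤ (k:ℝ) ^ (1-ε) := Real.rpow_le_rpow zero_le_one h1k h1ε.le
  have ha_nonneg : ∀ k : ℕ, 0 ≤ a k := by
    intro k
    simp only [hadef]
    positivity
  have ha_le_one : ∀ k : ℕ, 1 ≤ k → a k ≤ 1 := by
    intro k hk
    simp only [hadef]
    exact inv_le_one_of_one_le₀ (hp_one k hk)
  have ha_ge : ∀ k : ℕ, (k:ℝ)⁻¹ ≤ a k := by
    intro k
    rcases Nat.eq_zero_or_pos k with h | h
    · subst h
      simp [hadef, Real.zero_rpow h1ε.ne']
    · have h1k : (1:ℝ) ≤ (k:ℝ) := by exact_mod_cast h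
      have hle : (k:ℝ) ^ (1-ε) ≤ (k:ℝ) := by
        calc (k:ℝ) ^ (1-ε) ≤ (k:ℝ) ^ (1:ℝ) :=
          Real.rpow_le_rpow_of_exponent_le h1k (by linarith)
        _ = (k:ℝ) := Real.rpow_one _
      simp only [hadef]
      exact inv_anti₀ (hp_pos k h) hle
  have hadiv : Tendsto (fun n => ∑ i ∈ Finset.range n, a i) atTop atTop := by
    have hnotsum : ¬ Summable a := by
      intro hs
      exact Real.not_summable_natCast_inv
        (Summable.of_nonneg_of_le (fun k => inv_nonneg.mpr (Nat.cast_nonneg k)) ha_ge hs)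
    exact (not_summable_iff_tendsto_nat_atTop_of_nonneg ha_nonneg).mp hnotsum
  have ha0 : Tendsto a atTop (𝓝 0) := by
    have hptop : Tendsto (fun k : ℕ => (k:ℝ) ^ (1-ε)) atTop atTop :=
      (tendsto_rpow_atTop h1ε).comp tendsto_natCast_atTop_atTop
    exact hptop.inv_tendsto_atTop
  -- tail sums
  set t : ℕ → ℝ := fun K => ∑' j, U (j + K) with htdef
  have hUsh : ∀ K, Summable (fun j => U (j + K)) := fun K => (summable_nat_add_iff K).mpr hUsum
  have ht_nonneg : ∀ K, 1 ≤ K → 0 ≤ t K := by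
    intro K hK
    exact tsum_nonneg fun j => hU _ (by omega)
  have ht_rec : ∀ K, t K = U K + t (K + 1) := by
    intro K
    have h1 : ∑' j, U (j + K) = U (0 + K) + ∑' j, U (j + 1 + K) := Summable.tsum_eq_zero_add (hUsh K)
    rw [zero_add] at h1
    simp only [htdef]
    rw [h1]
    congr 1
    exact tsum_congr fun j => by congr 1; omega
  have ht_mono : ∀ i j : ℕ, 1 ≤ i → i ≤ j → t j ≤ t i := by
    intro i j hi hij
    induction j, hij using Nat.le_induction with
    | base => exact le_refl _
    | succ n hn ih =>
      have h1 := ht_rec n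
      have h2 : 0 ≤ U n := hU n (by omega)
      linarith
  have ht0 : Tendsto t atTop (𝓝 0) := tendsto_sum_nat_add U
  -- smallness of f
  have hfev : ∀ η : ℝ, 0 < η → ∀ᶠ k in atTop, f k ≤ η * a k := by
    intro η hη
    have h1 : ∀ᶠ k : ℕ in atTop, (k:ℝ) ^ (1-ε) * f k < η := hf.eventually (gt_mem_nhds hη)
    filter_upwards [h1, eventually_ge_atTop 1] with k hk hk1
    have hpk := hp_pos k hk1
    have h2 : f k ≤ η / (k:ℝ) ^ (1-ε) := by
      rw [le_div_iff₀ hpk]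
      nlinarith
    simpa [hadef, div_eq_mul_inv] using h2
  -- cleaned recursion
  have hrec' : ∀ k : ℕ, 1 ≤ k →
      V (k+1) ≤ V k - C₁ * a k * V k + f k * V k + C₂ * a k * Real.sqrt (V k) + U k := by
    intro k hk
    have h := hrec k hk
    have e1 : C₁ / (k:ℝ) ^ (1-ε) = C₁ * a k := by simp [hadef, div_eq_mul_inv]
    have e2 : C₂ / (k:ℝ) ^ (1-ε) = C₂ * a k := by simp [hadef, div_eq_mul_inv]
    rw [e1, e2] at h
    nlinarith [h]
  -- Stage 1: boundedness
  set B := C₂^2/C₁ with hBdef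
  have hB : C₁ * B = C₂^2 := by
    rw [hBdef]; field_simp
  have hB0 : 0 < B := by rw [hBdef]; positivity
  obtain ⟨N₀, hN₀⟩ := eventually_atTop.mp (hfev (C₁/2) (by linarith))
  set K₀ := max N₀ 1 with hK₀def
  have hK₀1 : 1 ≤ K₀ := le_max_right _ _
  have hK₀f : ∀ k, K₀ ≤ k → f k ≤ (C₁/2) * a k := fun k hk =>
    hN₀ k ((le_max_left _ _).trans hk)
  have hstep : ∀ k, K₀ ≤ k →
      V (k+1) ≤ V k - (C₁/4) * (a k * V k) + B * a k + U k := by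
    intro k hk
    have hk1 : 1 ≤ k := hK₀1.trans hk
    have h := hrec' k hk1
    have hVk := hV k hk1
    have hfk : f k * V k ≤ (C₁/2) * a k * V k :=
      mul_le_mul_of_nonneg_right (hK₀f k hk) hVk
    set s := Real.sqrt (V k) with hsdef
    have hs : s * s = V k := Real.mul_self_sqrt hVk
    have hsn : 0 ≤ s := Real.sqrt_nonneg _
    have hamg : C₂ * s ≤ (C₁/4) * (s*s) + B := by
      nlinarith [sq_nonneg ((C₁/2)*s - C₂), hB, hC₁]
    have h2 : C₂ * a k * s ≤ a k * ((C₁/4) * V k + B) := by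
      have h2a : a k * (C₂ * s) ≤ a k * ((C₁/4) * (s*s) + B) :=
        mul_le_mul_of_nonneg_left hamg (ha_nonneg k)
      rw [hs] at h2a
      linarith
    linarith
  set M₀ := max (V K₀) (4*B/C₁ + B) with hM₀def
  have hbdd : ∀ k, K₀ ≤ k → V k ≤ M₀ + (t K₀ - t k) := by
    intro k hk
    induction k, hk using Nat.le_induction with
    | base =>
      have : V K₀ ≤ M₀ := le_max_left _ _
      linarith
    | succ n hn ih =>
      have hn1 : 1 ≤ n := hK₀1.trans hn
      have hstep' := hstep n hn
      have htn := ht_rec n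
      have htm : t n ≤ t K₀ := ht_mono K₀ n hK₀1 hn
      have han := ha_nonneg n
      have ha1 := ha_le_one n hn1
      have hVn := hV n hn1
      rcases le_or_gt (4*B/C₁) (V n) with hc | hc
      · have h4 : B ≤ (C₁/4) * V n := by
          have := (div_le_iff₀ hC₁).mp hc
          linarith
        have h5 := mul_le_mul_of_nonneg_left h4 han
        nlinarith
      · have h6 : (0:ℝ) ≤ (C₁/4) * (a n * V n) := by positivity
        have h7 : B * a n ≤ B := by nlinarith
        have h9 : 4*B/C₁ + B ≤ M₀ := le_max_right _ _
        linarith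
  set M := M₀ + t K₀ with hMdef
  have hM : ∀ k, K₀ ≤ k → V k ≤ M := by
    intro k hk
    have h1 := hbdd k hk
    have h2 := ht_nonneg k (hK₀1.trans hk)
    linarith
  have hM0 : 0 ≤ M := (hV K₀ hK₀1).trans (hM K₀ le_rfl)
  clear_value B M₀ M K₀
  clear hB hB0 hBdef hM₀def hMdef hK₀def hbdd hstep hN₀ hK₀f
  -- Stage 2
  have hL0 : (0:ℝ) < C₂^2/C₁^2 := by positivity
  have key : ∀ b : ℝ, C₂^2/C₁^2 < b → Filter.limsup (fun k : ℕ => V k) atTop ≤ b := by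
    intro b hb
    obtain ⟨A, hA1, hA2, hA0⟩ : ∃ A : ℝ, C₂^2/C₁^2 < A ∧ A < b ∧ 0 < A :=
      ⟨(C₂^2/C₁^2 + b)/2, by linarith, by linarith, by linarith⟩
    obtain ⟨sA, hsA0, hsA⟩ : ∃ s : ℝ, 0 < s ∧ s * s = A :=
      ⟨Real.sqrt A, Real.sqrt_pos.mpr hA0, Real.mul_self_sqrt hA0.le⟩
    have hcs : C₂ < C₁ * sA := by
      have hA1' : C₂^2 < A * C₁^2 := (div_lt_iff₀ (by positivity)).mp hA1
      have h1 : C₂^2 < (C₁ * sA)^2 := by nlinarith [hsA, sq_nonneg C₁, hA1']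
      by_contra hcon
      push_neg at hcon
      have h2 : (C₁ * sA)^2 ≤ C₂^2 := pow_le_pow_left₀ (by positivity) hcon 2
      linarith
    obtain ⟨c', hc'eq, hc'0⟩ : ∃ c' : ℝ, c' = C₁ * sA - C₂ ∧ 0 < c' :=
      ⟨C₁ * sA - C₂, rfl, by linarith⟩
    obtain ⟨γ, hγeq, hγ0⟩ : ∃ γ : ℝ, γ = c' * sA / 2 ∧ 0 < γ :=
      ⟨c' * sA / 2, rfl, by positivity⟩
    obtain ⟨η, hη0, hηM⟩ : ∃ η : ℝ, 0 < η ∧ η * M ≤ γ := by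
      refine ⟨min 1 (γ / (M+1)), lt_min one_pos (by positivity), ?_⟩
      have h1 : min 1 (γ / (M+1)) ≤ γ/(M+1) := min_le_right _ _
      have h3 : min 1 (γ / (M+1)) * (M+1) ≤ γ := (le_div_iff₀ (by linarith)).mp h1
      have h4 : 0 < min 1 (γ / (M+1)) := lt_min one_pos (by positivity)
      nlinarith
    obtain ⟨D, hDeq, hD0⟩ : ∃ D : ℝ, D = C₂ * sA + γ ∧ 0 < D :=
      ⟨C₂ * sA + γ, rfl, by positivity⟩
    obtain ⟨δ₁, hδ₁0, hDδ⟩ : ∃ δ₁ : ℝ, 0 < δ₁ ∧ D * δ₁ ≤ (b-A)/2 := by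
      refine ⟨(b - A)/(2*(D+1)), div_pos (by linarith) (by linarith), ?_⟩
      have hq : (b - A)/(2*(D+1)) * (2*(D+1)) = b - A :=
        div_mul_cancel₀ _ (by positivity)
      have h5 : 0 ≤ (b - A)/(2*(D+1)) := le_of_lt (div_pos (by linarith) (by linarith))
      linarith
    -- choose K
    have hev : ∀ᶠ k : ℕ in atTop,
        (K₀ ≤ k ∧ f k ≤ η * a k) ∧ (a k < δ₁ ∧ t k < (b-A)/2) := by
      filter_upwards [eventually_ge_atTop K₀, hfev η hη0,
        ha0.eventually (gt_mem_nhds hδ₁0),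
        ht0.eventually (gt_mem_nhds (by linarith : (0:ℝ) < (b-A)/2))] with k h1 h2 h3 h4
      exact ⟨⟨h1, h2⟩, h3, h4⟩
    obtain ⟨K, hK⟩ := eventually_atTop.mp hev
    have hKK₀ : K₀ ≤ K := (hK K le_rfl).1.1
    have hK1 : 1 ≤ K := hK₀1.trans hKK₀
    have hKf : ∀ k, K ≤ k → f k ≤ η * a k := fun k hk => (hK k hk).1.2
    have hKa : ∀ k, K ≤ k → a k ≤ δ₁ := fun k hk => (hK k hk).2.1.le
    have hKt : t K ≤ (b-A)/2 := (hK K le_rfl).2.2.le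
    -- f-term bound
    have hfbound : ∀ k, K ≤ k → f k * V k ≤ γ * a k := by
      intro k hk
      have hk1 : 1 ≤ k := hK1.trans hk
      have hVk := hV k hk1
      have han := ha_nonneg k
      have h1 : f k * V k ≤ η * a k * V k := mul_le_mul_of_nonneg_right (hKf k hk) hVk
      have h2 : V k ≤ M := hM k (hKK₀.trans hk)
      have h3 : η * a k * V k ≤ η * a k * M :=
        mul_le_mul_of_nonneg_left h2 (by positivity)
      have h4 := mul_le_mul_of_nonneg_left hηM han
      nlinarith
    -- decrement step
    have hdec : ∀ k, K ≤ k → A ≤ V k → V (k+1) ≤ V k - γ * a k + U k := by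
      intro k hk hAV
      have hk1 : 1 ≤ k := hK1.trans hk
      have h := hrec' k hk1
      have hVk := hV k hk1
      have han := ha_nonneg k
      set s := Real.sqrt (V k) with hsdef
      have hs : s * s = V k := Real.mul_self_sqrt hVk
      have hsn : 0 ≤ s := Real.sqrt_nonneg _
      have hsge : sA ≤ s := by
        have h0 : sA = Real.sqrt A := by rw [← hsA, Real.sqrt_mul_self hsA0.le]
        rw [hsdef, h0]
        exact Real.sqrt_le_sqrt hAV
      have e1 : C₂ - C₁ * s ≤ -c' := by
        have := mul_le_mul_of_nonneg_left hsge hC₁.le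
        rw [hc'eq]; linarith
      have e2 : s * (C₂ - C₁ * s) ≤ s * (-c') := mul_le_mul_of_nonneg_left e1 hsn
      have e3 : c' * sA ≤ c' * s := mul_le_mul_of_nonneg_left hsge hc'0.le
      have hd1 : C₂ * s - C₁ * V k ≤ -(2*γ) := by
        rw [← hs, hγeq]
        nlinarith
      have hd2 : a k * (C₂ * s - C₁ * V k) ≤ a k * (-(2*γ)) :=
        mul_le_mul_of_nonneg_left hd1 han
      have hf1 := hfbound k hk
      nlinarith
    -- existence of a small value
    have hex : ∃ k₀, K ≤ k₀ ∧ V k₀ ≤ A := by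
      by_contra hno
      push_neg at hno
      have hind : ∀ n, K ≤ n →
          V n + γ * (∑ i ∈ Finset.Ico K n, a i) ≤ V K + (t K - t n) := by
        intro n hn
        induction n, hn using Nat.le_induction with
        | base => simp
        | succ n hn ih =>
          have h1 := hdec n hn (hno n hn).le
          have h2 : ∑ i ∈ Finset.Ico K (n+1), a i = (∑ i ∈ Finset.Ico K n, a i) + a n :=
            Finset.sum_Ico_succ_top hn _
          have h3 := ht_rec n
          rw [h2]
          nlinarith
      have hito : Tendsto (fun n => γ * (∑ i ∈ Finset.Ico K n, a i)) atTop atTop := by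
        have h0 : (fun n => (∑ i ∈ Finset.range n, a i) + -(∑ i ∈ Finset.range K, a i))
            =ᶠ[atTop] (fun n => ∑ i ∈ Finset.Ico K n, a i) := by
          filter_upwards [eventually_ge_atTop K] with n hn
          rw [Finset.sum_Ico_eq_sub _ hn]; ring
        exact (Tendsto.congr' h0 (tendsto_atTop_add_const_right _ _ hadiv)).const_mul_atTop hγ0
      obtain ⟨n, hn1, hn2⟩ :=
        ((hito.eventually_ge_atTop (V K + t K + 1)).and (eventually_ge_atTop K)).exists
      have h5 := hind n hn2
      have hVn := hV n (hK1.trans hn2)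
      have htn := ht_nonneg n (hK1.trans hn2)
      linarith
    obtain ⟨k₀, hk₀K, hk₀A⟩ := hex
    have hk₀1 : 1 ≤ k₀ := hK1.trans hk₀K
    -- main induction
    have hmain : ∀ k, k₀ ≤ k → V k ≤ A + D * δ₁ + (t k₀ - t k) := by
      intro k hk
      induction k, hk using Nat.le_induction with
      | base =>
        have h1 : 0 ≤ D * δ₁ := by positivity
        linarith
      | succ n hn ih =>
        have hnK : K ≤ n := hk₀K.trans hn
        have hn1 : 1 ≤ n := hK1.trans hnK
        have h3 := ht_rec n
        have htm : t n ≤ t k₀ := ht_mono k₀ n hk₀1 hn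
        have hUn : 0 ≤ U n := hU n hn1
        have hDa : D * a n ≤ D * δ₁ := mul_le_mul_of_nonneg_left (hKa n hnK) hD0.le
        rcases le_or_gt (V n) A with hc | hc
        · have h := hrec' n hn1
          have hVn := hV n hn1
          have han := ha_nonneg n
          set s := Real.sqrt (V n) with hsdef
          have hsn : 0 ≤ s := Real.sqrt_nonneg _
          have hsle : s ≤ sA := by
            have h0 : sA = Real.sqrt A := by rw [← hsA, Real.sqrt_mul_self hsA0.le]
            rw [hsdef, h0]
            exact Real.sqrt_le_sqrt hc
          have hf1 := hfbound n hnK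
          have h4 : (0:ℝ) ≤ C₁ * a n * V n := by positivity
          have h5 : C₂ * a n * s ≤ C₂ * a n * sA :=
            mul_le_mul_of_nonneg_left hsle (by positivity)
          have hexp : D * a n = C₂ * sA * a n + γ * a n := by rw [hDeq]; ring
          linarith
        · have h1 := hdec n hnK hc.le
          have h2 : 0 ≤ γ * a n := by positivity
          linarith
    -- conclude
    have hfinal : ∀ᶠ k : ℕ in atTop, V k ≤ b := by
      filter_upwards [eventually_ge_atTop k₀] with k hk
      have h1 := hmain k hk
      have h2 : t k₀ ≤ t K := ht_mono K k₀ hK1 hk₀K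
      have h3 : 0 ≤ t k := ht_nonneg k (hk₀1.trans hk)
      linarith
    exact limsup_le_of_le
      (isCoboundedUnder_le_of_eventually_le atTop (x := 0)
        (by filter_upwards [eventually_ge_atTop 1] with k hk; exact hV k hk)) hfinal
  by_contra hcon
  push_neg at hcon
  have hkey := key ((C₂^2/C₁^2 + Filter.limsup (fun k:ℕ => V k) atTop)/2) (by linarith)
  linarith
end

section
/- Let ε ∈ (0,1) and let {V_k}_{k≥1} and {U_k}_{k≥1} be nonnegative real sequences satisfying V_{k+1} ≤ (1 − C/k^{1−ε} + f(k)) V_k + g(k) √(V_k) + U_k for all k ≥ 1, where C > 0, f(k) = o(1/k^{1−ε}) (i.e., k^{1−ε} f(k) → 0 as k → ∞), g(k) = O(1/k) (i.e., k·g(k) is bounded), and Σ_{k=1}^∞ U_k < ∞. Then V_k → 0 as k → ∞. -/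
open Filter Topology

lemma aux_rec (V b W : ℕ → ℝ) (m : ℕ)
    (hb : ∀ k, m ≤ k → 0 ≤ b k ∧ b k ≤ 1)
    (hW : ∀ k, m ≤ k → 0 ≤ W k)
    (hrec : ∀ k, m ≤ k → V (k+1) ≤ (1 - b k) * V k + W k) :
    ∀ n, m ≤ n → V n ≤ (∏ k ∈ Finset.Ico m n, (1 - b k)) * V m
      + ∑ k ∈ Finset.Ico m n, W k := by
  intro n hn
  induction n, hn using Nat.le_induction with
  | base => simp
  | succ n hn ih =>
    have hprod : 0 ≤ ∏ k ∈ Finset.Ico m n, (1 - b k) :=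
      Finset.prod_nonneg fun k hk => by
        have := hb k (Finset.mem_Ico.mp hk).1; linarith [this.2]
    have hsum : 0 ≤ ∑ k ∈ Finset.Ico m n, W k :=
      Finset.sum_nonneg fun k hk => hW k (Finset.mem_Ico.mp hk).1
    have hbn := hb n hn
    have h1 : V (n+1) ≤ (1 - b n) * V n + W n := hrec n hn
    have h2 : (1 - b n) * V n ≤ (1 - b n) *
        ((∏ k ∈ Finset.Ico m n, (1 - b k)) * V m + ∑ k ∈ Finset.Ico m n, W k) :=
      mul_le_mul_of_nonneg_left ih (by linarith [hbn.2])
    rw [Finset.prod_Ico_succ_top hn, Finset.sum_Ico_succ_top hn]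
    nlinarith [hbn.1, hbn.2]

lemma aux_prod (C ε : ℝ) (hC : 0 < C) (hε0 : 0 < ε) (hε1 : ε < 1) (m : ℕ)
    (hb1 : ∀ k, m ≤ k → C / (4 * (k:ℝ) ^ (1 - ε)) ≤ 1) :
    Tendsto (fun n => ∏ k ∈ Finset.Ico m n, (1 - C / (4 * (k:ℝ) ^ (1 - ε)))) atTop (𝓝 0) := by
  set b : ℕ → ℝ := fun k => C / (4 * (k:ℝ) ^ (1 - ε)) with hb
  have hbnn : ∀ k, 0 ≤ b k := fun k => by positivity
  have hnotsum : ¬ Summable b := by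
    intro hs
    have h1 : Summable (fun k : ℕ => ((k:ℝ) ^ (1 - ε))⁻¹) := by
      have := hs.mul_left (4 / C)
      refine this.congr fun k => ?_
      field_simp [hb]
      ring
    rw [Real.summable_nat_rpow_inv] at h1
    linarith
  have hdiv : Tendsto (fun n => ∑ k ∈ Finset.range n, b k) atTop atTop :=
    (not_summable_iff_tendsto_nat_atTop_of_nonneg hbnn).mp hnotsum
  have hdiv2 : Tendsto (fun n => ∑ k ∈ Finset.Ico m n, b k) atTop atTop := by
    apply Tendsto.congr' (f₁ := fun n => (∑ k ∈ Finset.range n, b k) - ∑ k ∈ Finset.range m, b k)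
    · filter_upwards [eventually_ge_atTop m] with n hn
      rw [Finset.sum_Ico_eq_sub _ hn]
    · exact hdiv.atTop_add tendsto_const_nhds
  have hexp : Tendsto (fun n => Real.exp (-(∑ k ∈ Finset.Ico m n, b k))) atTop (𝓝 0) :=
    Real.tendsto_exp_atBot.comp (tendsto_neg_atTop_atBot.comp hdiv2)
  have hle : ∀ n, ∏ k ∈ Finset.Ico m n, (1 - b k)
      ≤ Real.exp (-(∑ k ∈ Finset.Ico m n, b k)) := by
    intro n
    have h : Real.exp (-(∑ k ∈ Finset.Ico m n, b k)) = ∏ k ∈ Finset.Ico m n, Real.exp (-b k) := by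
      rw [← Real.exp_sum, Finset.sum_neg_distrib]
    rw [h]
    refine Finset.prod_le_prod (fun k hk => ?_) (fun k hk => ?_)
    · have := hb1 k (Finset.mem_Ico.mp hk).1; linarith
    · linarith [Real.add_one_le_exp (-b k)]
  have hge : ∀ n, 0 ≤ ∏ k ∈ Finset.Ico m n, (1 - b k) := fun n =>
    Finset.prod_nonneg fun k hk => by linarith [hb1 k (Finset.mem_Ico.mp hk).1]
  exact tendsto_of_tendsto_of_tendsto_of_le_of_le tendsto_const_nhds hexp hge hle

/-- Lemma 8 of the paper: if nonnegative sequences `V, U` satisfy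
`V_{k+1} ≤ (1 − C/k^{1−ε} + f(k)) V_k + g(k)√V_k + U_k` with `C > 0`, `ε ∈ (0,1)`,
`f(k) = o(1/k^{1−ε})`, `g(k) = O(1/k)` and `Σ U_k < ∞`, then `V_k → 0`. -/
theorem stmt_12 (V U f g : ℕ → ℝ) (C ε : ℝ)
    (hC : 0 < C) (hε0 : 0 < ε) (hε1 : ε < 1)
    (hV : ∀ k, 1 ≤ k → 0 ≤ V k) (hU : ∀ k, 1 ≤ k → 0 ≤ U k)
    (hf : Tendsto (fun k : ℕ => (k : ℝ) ^ (1 - ε) * f k) atTop (𝓝 0))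
    (hg : ∃ M : ℝ, ∀ k : ℕ, 1 ≤ k → |(k : ℝ) * g k| ≤ M)
    (hUsum : Summable U)
    (hrec : ∀ k : ℕ, 1 ≤ k →
      V (k + 1) ≤ (1 - C / (k : ℝ) ^ (1 - ε) + f k) * V k
        + g k * Real.sqrt (V k) + U k) :
    Tendsto V atTop (𝓝 0) := by
  obtain ⟨M, hM⟩ := hg
  -- pointwise bound on the g-term of W
  have hgb : ∀ k : ℕ, 1 ≤ k →
      (g k)^2 * (k:ℝ)^(1-ε) / C ≤ (M^2 / C) * (k:ℝ)^(-(1+ε)) := by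
    intro k hk
    have hkpos : (0:ℝ) < (k:ℝ) := by exact_mod_cast hk
    have habs := hM k hk
    have h2 : ((k:ℝ) * g k)^2 ≤ M^2 := by
      have := abs_nonneg ((k:ℝ) * g k)
      nlinarith [sq_abs ((k:ℝ) * g k)]
    have h3 : (k:ℝ)^(-(1+ε)) * (k:ℝ)^(2:ℕ) = (k:ℝ)^(1-ε) := by
      rw [← Real.rpow_natCast (k:ℝ) 2, ← Real.rpow_add hkpos]
      congr 1
      push_cast
      ring
    have h5 : (g k)^2 * (k:ℝ)^(1-ε) = ((k:ℝ) * g k)^2 * (k:ℝ)^(-(1+ε)) := by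
      rw [mul_pow, ← h3]; ring
    have h6 : (g k)^2 * (k:ℝ)^(1-ε) ≤ M^2 * (k:ℝ)^(-(1+ε)) := by
      rw [h5]
      exact mul_le_mul_of_nonneg_right h2 (Real.rpow_nonneg hkpos.le _)
    rw [div_mul_eq_mul_div]
    exact (div_le_div_iff_of_pos_right hC).mpr h6
  set W : ℕ → ℝ := fun k => (g k)^2 * (k:ℝ)^(1-ε) / C + U k with hWdef
  have hWsum : Summable W := by
    refine Summable.add ?_ hUsum
    refine Summable.of_nonneg_of_le (fun k => by positivity) (fun k => ?_)
      ((Real.summable_nat_rpow.mpr (by linarith : -(1+ε) < -1)).mul_left (M^2/C))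
    rcases Nat.eq_zero_or_pos k with rfl | hk
    · simp only [Nat.cast_zero, Real.zero_rpow (by linarith : (1:ℝ) - ε ≠ 0),
        Real.zero_rpow (by linarith : -(1+ε) ≠ 0)]
      simp
    · exact hgb k hk
  have hWnn : ∀ k, 1 ≤ k → 0 ≤ W k := fun k hk => by
    have := hU k hk; positivity
  -- choose threshold N
  have hfe : ∀ᶠ k : ℕ in atTop, (k:ℝ)^(1-ε) * f k < C/2 :=
    hf.eventually_lt_const (by linarith)
  have hpow : Tendsto (fun k : ℕ => (k:ℝ)^(1-ε)) atTop atTop :=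
    (tendsto_rpow_atTop (by linarith)).comp tendsto_natCast_atTop_atTop
  have hae : ∀ᶠ k : ℕ in atTop, C/4 ≤ (k:ℝ)^(1-ε) := hpow.eventually_ge_atTop _
  obtain ⟨N, hN⟩ := (hfe.and (hae.and (eventually_ge_atTop 1))).exists_forall_of_atTop
  have hN1 : 1 ≤ N := (hN N le_rfl).2.2
  set b : ℕ → ℝ := fun k => C / (4 * (k:ℝ)^(1-ε)) with hbdef
  -- key step inequality
  have hstep : ∀ k, N ≤ k → V (k+1) ≤ (1 - b k) * V k + W k := by
    intro k hk
    obtain ⟨hf1, hf2, hk1⟩ := hN k hk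
    have hkpos : (0:ℝ) < (k:ℝ) := by exact_mod_cast hk1
    have hapos : (0:ℝ) < (k:ℝ)^(1-ε) := Real.rpow_pos_of_pos hkpos _
    set a := (k:ℝ)^(1-ε)
    have hVk := hV k hk1
    set s := Real.sqrt (V k) with hsdef
    have hs : s ^ 2 = V k := Real.sq_sqrt hVk
    have hsnn : 0 ≤ s := Real.sqrt_nonneg _
    have hfk : f k ≤ C / (2 * a) := by
      rw [le_div_iff₀ (by positivity)]
      nlinarith
    have hsq : g k * s ≤ C / (4 * a) * V k + (g k)^2 * a / C := by
      rw [div_mul_eq_mul_div, div_add_div _ _ (by positivity) (by positivity),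
        le_div_iff₀ (by positivity), ← hs]
      nlinarith [sq_nonneg (C * s - 2 * g k * a)]
    have hcoef : (1 - C / a + f k) * V k ≤ (1 - C / (2 * a)) * V k := by
      apply mul_le_mul_of_nonneg_right _ hVk
      have : C / (2 * a) + C / (2 * a) = C / a := by field_simp; ring
      linarith
    have hhalf : C / (2 * a) = 2 * (C / (4 * a)) := by field_simp; ring
    have := hrec k hk1
    simp only [hWdef, hbdef]
    calc V (k+1) ≤ (1 - C / a + f k) * V k + g k * s + U k := this
      _ ≤ (1 - C / (2 * a)) * V k + (C / (4 * a) * V k + (g k)^2 * a / C) + U k := by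
          linarith
      _ = (1 - C / (4 * a)) * V k + ((g k)^2 * a / C + U k) := by
          rw [hhalf]; ring
  have hbprop : ∀ k, N ≤ k → 0 ≤ b k ∧ b k ≤ 1 := by
    intro k hk
    obtain ⟨_, hf2, hk1⟩ := hN k hk
    have hkpos : (0:ℝ) < (k:ℝ) := by exact_mod_cast hk1
    have hapos : (0:ℝ) < (k:ℝ)^(1-ε) := Real.rpow_pos_of_pos hkpos _
    constructor
    · positivity
    · rw [div_le_one (by positivity)]; linarith
  -- conclude
  rw [tendsto_order]
  constructor
  · intro x hx
    filter_upwards [eventually_ge_atTop 1] with n hn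
    have := hV n hn; linarith
  · intro δ hδ
    have htail : Tendsto (fun i => ∑' k, W (k + i)) atTop (𝓝 0) := by
      simpa using tendsto_sum_nat_add W
    obtain ⟨N₁, hN₁lt, hN₁ge⟩ :=
      ((htail.eventually_lt_const (by linarith : (0:ℝ) < δ/2)).and
        (eventually_ge_atTop N)).exists
    have hN₁1 : 1 ≤ N₁ := le_trans hN1 hN₁ge
    have hWshift : Summable (fun k => W (k + N₁)) := (summable_nat_add_iff N₁).mpr hWsum
    have hsum_le : ∀ n, ∑ k ∈ Finset.Ico N₁ n, W k ≤ ∑' k, W (k + N₁) := by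
      intro n
      rcases le_or_gt N₁ n with h | h
      · rw [Finset.sum_Ico_eq_sum_range]
        have : ∀ k, W (N₁ + k) = W (k + N₁) := fun k => by rw [Nat.add_comm]
        simp only [this]
        exact Summable.sum_le_tsum _ (fun k _ => hWnn _ (le_trans hN₁1 (Nat.le_add_left _ _))) hWshift
      · rw [Finset.Ico_eq_empty (by omega)]
        simp only [Finset.sum_empty]
        exact tsum_nonneg fun k => hWnn _ (le_trans hN₁1 (Nat.le_add_left _ _))
    have hprod0 : Tendsto (fun n => (∏ k ∈ Finset.Ico N₁ n, (1 - b k)) * V N₁) atTop (𝓝 0) := by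
      have hp := aux_prod C ε hC hε0 hε1 N₁
        (fun k hk => (hbprop k (le_trans hN₁ge hk)).2)
      simpa using hp.mul_const (V N₁)
    filter_upwards [hprod0.eventually_lt_const (by linarith : (0:ℝ) < δ/2),
      eventually_ge_atTop N₁] with n h1 h2
    have hr := aux_rec V b W N₁ (fun k hk => hbprop k (le_trans hN₁ge hk))
      (fun k hk => hWnn k (le_trans hN₁1 hk))
      (fun k hk => hstep k (le_trans hN₁ge hk)) n h2
    have := hsum_le n
    linarith
end

section
/- Consider the SimGD-A iteration z_{k+1} = z_k − ((1−p)/(k+1)^p) G(z_k) + ((1−p)γ/(k+1)) (z₀ − z_k) with p ∈ (1/2, 1) and γ > 0, where G is monotone and R-Lipschitz with G(z_⋆) = 0. Then the iterates are bounded: there exists a constant C > 0 such that ‖z_k − z_⋆‖² ≤ C for all k ≥ 0. -/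
open scoped RealInnerProductSpace

lemma rpow_thresh {M x s : ℝ} (hM : 0 ≤ M) (hs : 0 < s) (hx1 : 1 ≤ x)
    (hx : M ^ (1/s) ≤ x) : M ≤ x ^ s := by
  rcases le_or_gt M 1 with h | h
  · exact h.trans (Real.one_le_rpow hx1 hs.le)
  · have hM0 : 0 < M := lt_trans one_pos h
    have := Real.rpow_le_rpow (Real.rpow_nonneg hM _) hx hs.le
    rwa [← Real.rpow_mul hM, one_div_mul_cancel hs.ne', Real.rpow_one] at this

lemma expand_sq {E : Type*} [NormedAddCommGroup E] [InnerProductSpace ℝ E]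
    (v g w : E) (α β : ℝ) :
    ‖(1-β)•v - α•g + β•w‖^2 = (1-β)^2*‖v‖^2 + α^2*‖g‖^2 + β^2*‖w‖^2
      - 2*α*(1-β)*⟪g,v⟫ + 2*β*(1-β)*⟪v,w⟫ - 2*α*β*⟪g,w⟫ := by
  have h : ∀ x : E, ‖x‖^2 = ⟪x,x⟫ := fun x => (real_inner_self_eq_norm_sq x).symm
  simp only [h, inner_add_left, inner_add_right, inner_sub_left, inner_sub_right,
    real_inner_smul_left, real_inner_smul_right]
  rw [real_inner_comm v g, real_inner_comm w v, real_inner_comm w g]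
  ring

lemma step_ineq {E : Type*} [NormedAddCommGroup E] [InnerProductSpace ℝ E]
    (v g w : E) (α β R : ℝ) (hα : 0 ≤ α) (hβ : 0 ≤ β) (hβ1 : β ≤ 1) (hR : 0 ≤ R)
    (hg : ‖g‖ ≤ R * ‖v‖) (hm : 0 ≤ ⟪g, v⟫) :
    ‖(1-β)•v - α•g + β•w‖^2 ≤
      (1 - β + α^2*R^2 + α*β*R)*‖v‖^2 + (β + α*β*R)*‖w‖^2 := by
  rw [expand_sq]
  have hv : 0 ≤ ‖v‖ := norm_nonneg v
  have hw : 0 ≤ ‖w‖ := norm_nonneg w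
  have hgn : 0 ≤ ‖g‖ := norm_nonneg g
  have h1 : ⟪v,w⟫ ≤ ‖v‖ * ‖w‖ := real_inner_le_norm v w
  have h2 : -(‖g‖ * ‖w‖) ≤ ⟪g,w⟫ := neg_le_of_abs_le (abs_real_inner_le_norm g w)
  have h3 : 2 * ‖v‖ * ‖w‖ ≤ ‖v‖^2 + ‖w‖^2 := by nlinarith [sq_nonneg (‖v‖ - ‖w‖)]
  have h4 : ‖g‖^2 ≤ R^2 * ‖v‖^2 := by nlinarith
  nlinarith [mul_nonneg hα hβ, mul_nonneg (mul_nonneg hα hβ) hR,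
    mul_nonneg hβ (sub_nonneg.2 hβ1), mul_nonneg hα (sub_nonneg.2 hβ1),
    mul_le_mul_of_nonneg_left hg hw, sq_nonneg (‖v‖ - ‖w‖),
    mul_nonneg (mul_nonneg hα hα) (sq_nonneg R)]

set_option maxHeartbeats 800000 in
/-- Boundedness of SimGD-A iterates: if `G` is monotone and `R`-Lipschitz with `G z⋆ = 0`,
`p ∈ (1/2, 1)`, `γ > 0`, and `z_{k+1} = z_k − ((1−p)/(k+1)^p) G(z_k) + ((1−p)γ/(k+1))(z₀ − z_k)`,
then there is a constant `C > 0` with `‖z_k − z⋆‖² ≤ C` for all `k ≥ 0`. -/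
theorem stmt_13 {d : ℕ} (G : EuclideanSpace ℝ (Fin d) → EuclideanSpace ℝ (Fin d))
    (R p γ : ℝ) (hR : 0 ≤ R) (hp₁ : 1 / 2 < p) (hp₂ : p < 1) (hγ : 0 < γ)
    (hmono : ∀ z₁ z₂, 0 ≤ ⟪G z₁ - G z₂, z₁ - z₂⟫)
    (hlip : ∀ z₁ z₂, ‖G z₁ - G z₂‖ ≤ R * ‖z₁ - z₂‖)
    (zstar : EuclideanSpace ℝ (Fin d)) (hzstar : G zstar = 0)
    (z : ℕ → EuclideanSpace ℝ (Fin d))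
    (hiter : ∀ k : ℕ, z (k + 1) = z k - ((1 - p) / ((k : ℝ) + 1) ^ p) • G (z k)
      + ((1 - p) * γ / ((k : ℝ) + 1)) • (z 0 - z k)) :
    ∃ C : ℝ, 0 < C ∧ ∀ k : ℕ, ‖z k - zstar‖ ^ 2 ≤ C := by
  have hp0 : 0 < 1 - p := by linarith
  have hpp : 0 < p := by linarith
  have hs : 0 < 2*p - 1 := by linarith
  set a : ℕ → ℝ := fun k => ‖z k - zstar‖^2 with ha
  have ha0 : ∀ k, 0 ≤ a k := fun k => sq_nonneg _
  set b : ℝ := ‖z 0 - zstar‖^2 with hb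
  set M₀ : ℝ := (1 + (1-p)*R) * b with hM₀
  have hM₀0 : 0 ≤ M₀ := by
    apply mul_nonneg _ (sq_nonneg _)
    nlinarith
  set T : ℝ := max (max ((1-p)*γ) 1)
      (max ((4*(1-p)*R) ^ (1/p)) ((4*(1-p)*R^2/γ) ^ (1/(2*p-1)))) with hT
  set K : ℕ := ⌈T⌉₊ with hK
  -- basic facts per k
  have hg0 : ∀ k : ℕ, 0 ≤ ⟪G (z k), z k - zstar⟫ := by
    intro k
    have := hmono (z k) zstar
    simpa [hzstar] using this
  have hgl : ∀ k : ℕ, ‖G (z k)‖ ≤ R * ‖z k - zstar‖ := by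
    intro k
    have := hlip (z k) zstar
    simpa [hzstar] using this
  -- one-step bound for k ≥ K
  have hstep : ∀ k : ℕ, K ≤ k →
      a (k+1) ≤ (1 - ((1-p)*γ/((k:ℝ)+1))/2) * a k + ((1-p)*γ/((k:ℝ)+1)) * M₀ := by
    intro k hk
    set x : ℝ := (k:ℝ) + 1 with hx
    have hx1 : (1:ℝ) ≤ x := by
      have : (0:ℝ) ≤ (k:ℝ) := Nat.cast_nonneg k
      simp only [hx]; linarith
    have hx0 : (0:ℝ) < x := by positivity
    have hxT : T ≤ x := by
      have h1 : T ≤ (K:ℝ) := Nat.le_ceil T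
      have h2 : (K:ℝ) ≤ (k:ℝ) := Nat.cast_le.mpr hk
      simp only [hx]; linarith
    have hxp0 : (0:ℝ) < x ^ p := Real.rpow_pos_of_pos hx0 p
    set A : ℝ := (1-p)/x^p with hA
    set B : ℝ := (1-p)*γ/x with hB
    have hA0 : 0 ≤ A := by positivity
    have hB0 : 0 ≤ B := by positivity
    have hB1 : B ≤ 1 := by
      rw [hB, div_le_one hx0]
      exact le_trans (le_trans (le_max_left _ _) (le_max_left _ _)) hxT
    have hA1 : A ≤ 1 - p := by
      rw [hA]
      calc (1-p)/x^p ≤ (1-p)/1 := by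
            apply div_le_div_of_nonneg_left hp0.le one_pos
            exact Real.one_le_rpow hx1 hpp.le
        _ = 1 - p := by ring
    -- A * R ≤ 1/4
    have hAR : A * R ≤ 1/4 := by
      have hth : 4*(1-p)*R ≤ x ^ p := by
        apply rpow_thresh (by positivity) hpp hx1
        exact le_trans (le_trans (le_max_left _ _) (le_max_right _ _)) hxT
      rw [hA, div_mul_eq_mul_div, div_le_div_iff₀ hxp0 (by norm_num : (0:ℝ) < 4)]
      nlinarith
    -- A^2 * R^2 ≤ B / 4
    have hA2 : A^2 * R^2 ≤ B / 4 := by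
      have hth : 4*(1-p)*R^2/γ ≤ x ^ (2*p-1) := by
        apply rpow_thresh (by positivity) hs hx1
        exact le_trans (le_trans (le_max_right _ _) (le_max_right _ _)) hxT
      have hxs0 : (0:ℝ) < x ^ (2*p-1) := Real.rpow_pos_of_pos hx0 _
      have hx2p : (x^p)^2 = x ^ (2*p-1) * x := by
        rw [sq, ← Real.rpow_add hx0, show p + p = (2*p-1)+1 by ring,
          Real.rpow_add_one hx0.ne']
      have h5 : 4*(1-p)*R^2 ≤ γ * x ^ (2*p-1) := by
        rw [div_le_iff₀ hγ] at hth; linarith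
      have heq : A^2*R^2 = (1-p)^2*R^2/(x^(2*p-1)*x) := by
        rw [hA, div_pow, hx2p]; ring
      rw [heq, hB]
      rw [div_le_div_iff₀ (by positivity) (by norm_num : (0:ℝ) < 4)]
      have heq2 : (1-p)*γ/x * (x^(2*p-1)*x) = (1-p)*γ*x^(2*p-1) := by
        field_simp
      rw [heq2]
      nlinarith [mul_le_mul_of_nonneg_left h5 hp0.le]
    -- identify the iterate
    have hid : z (k+1) - zstar = (1-B)•(z k - zstar) - A•(G (z k)) + B•(z 0 - zstar) := by
      rw [hiter k, hA, hB, hx]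
      simp only [smul_sub, sub_smul, one_smul]
      abel
    have hmain := step_ineq (z k - zstar) (G (z k)) (z 0 - zstar) A B R hA0 hB0 hB1 hR
      (hgl k) (hg0 k)
    rw [← hid] at hmain
    have hcoef1 : 1 - B + A^2*R^2 + A*B*R ≤ 1 - B/2 := by
      have : A*B*R = B*(A*R) := by ring
      nlinarith [mul_le_mul_of_nonneg_left hAR hB0]
    have hcoef2 : B + A*B*R ≤ B * (1 + (1-p)*R) := by
      have : A*B*R ≤ (1-p)*B*R := by
        apply mul_le_mul_of_nonneg_right _ hR
        exact mul_le_mul_of_nonneg_right hA1 hB0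
      nlinarith
    calc a (k+1) ≤ (1 - B + A^2*R^2 + A*B*R)*(a k) + (B + A*B*R)*b := hmain
      _ ≤ (1 - B/2)*(a k) + (B * (1 + (1-p)*R))*b := by
          apply add_le_add
          · exact mul_le_mul_of_nonneg_right hcoef1 (ha0 k)
          · exact mul_le_mul_of_nonneg_right hcoef2 (sq_nonneg _)
      _ = (1 - B/2)*(a k) + B * M₀ := by rw [hM₀]; ring
  -- B k ≤ 1 and ≥ 0 for k ≥ K (needed in induction)
  have hBfacts : ∀ k : ℕ, K ≤ k → 0 ≤ (1-p)*γ/((k:ℝ)+1) ∧ (1-p)*γ/((k:ℝ)+1) ≤ 1 := by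
    intro k hk
    have hx0 : (0:ℝ) < (k:ℝ)+1 := by positivity
    constructor
    · positivity
    · rw [div_le_one hx0]
      have h1 : T ≤ (K:ℝ) := Nat.le_ceil T
      have h2 : (K:ℝ) ≤ (k:ℝ) := Nat.cast_le.mpr hk
      have h3 : (1-p)*γ ≤ T := le_trans (le_trans (le_max_left _ _) (le_max_left _ _)) le_rfl
      linarith
  -- finite max over first K+1 values
  have hne : (Finset.range (K+1)).Nonempty := ⟨0, Finset.mem_range.mpr (Nat.succ_pos K)⟩
  set F : ℝ := (Finset.range (K+1)).sup' hne a with hF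
  have hFle : ∀ j, j ≤ K → a j ≤ F :=
    fun j hj => Finset.le_sup' a (Finset.mem_range.mpr (Nat.lt_succ_of_le hj))
  set C₀ : ℝ := max F (2*M₀) with hC₀
  have hC₀0 : 0 ≤ C₀ := le_trans (ha0 K) (le_trans (hFle K le_rfl) (le_max_left _ _))
  have hind : ∀ n : ℕ, a (K + n) ≤ C₀ := by
    intro n
    induction n with
    | zero => exact le_trans (hFle K le_rfl) (le_max_left _ _)
    | succ n ih =>
      have hk : K ≤ K + n := Nat.le_add_right K n
      have h1 := hstep (K+n) hk
      obtain ⟨hB0', hB1'⟩ := hBfacts (K+n) hk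
      set B := (1-p)*γ/(((K+n:ℕ):ℝ)+1)
      have h2M : 2*M₀ ≤ C₀ := le_max_right _ _
      have := ha0 (K+n)
      have hKn : K + (n+1) = (K+n) + 1 := by ring
      rw [hKn]
      nlinarith [mul_le_mul_of_nonneg_left ih (by linarith : (0:ℝ) ≤ 1 - B/2)]
  refine ⟨C₀ + 1, by linarith, fun k => ?_⟩
  have : a k ≤ C₀ := by
    rcases le_or_gt k K with h | h
    · exact le_trans (hFle k h) (le_max_left _ _)
    · have : k = K + (k - K) := by omega
      rw [this]; exact hind (k - K)
  have h' : ‖z k - zstar‖^2 ≤ C₀ := this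
  linarith
end

section
/- Let H be a real inner product space, let β > 0, and let F : H → H be β-cocoercive, i.e., ⟨F(z₁) − F(z₂), z₁ − z₂⟩ ≥ β‖F(z₁) − F(z₂)‖² for all z₁, z₂ ∈ H. Let z_⋆ ∈ H satisfy F(z_⋆) = 0, let α > 0, and let ζ : [0,∞) → H be differentiable with ζ'(t) = −α F(ζ(t)) for all t ≥ 0. Then the function t ↦ ‖F(ζ(t))‖ is nonincreasing, and for every t > 0, ‖F(ζ(t))‖² ≤ ‖ζ(0) − z_⋆‖² / (2αβt). -/
/-!
Monotonicity of `F` makes the distance between any two trajectories of `ζ' = −α F(ζ)`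
nonincreasing. Applied to `ζ` and its time shift `ζ(· + δ)` and divided by `δ → 0⁺`, this shows
that the speed `α ‖F(ζ(t))‖` is nonincreasing. Cocoercivity and `F z⋆ = 0` then give
`d/du ‖ζ(u) − z⋆‖² ≤ −2αβ ‖F(ζ(u))‖² ≤ −2αβ ‖F(ζ(t))‖²` for `u ≤ t`, and integrating over
`[0, t]` yields `2αβ t ‖F(ζ(t))‖² ≤ ‖ζ(0) − z⋆‖²`.
-/

open scoped RealInnerProductSpace
open Set

lemma Convex.sub_le_mul_sub_of_hasDerivAt_le {D : Set ℝ} (hD : Convex ℝ D) {f f' : ℝ → ℝ}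
    {C : ℝ} (hf : ∀ t ∈ D, HasDerivAt f (f' t) t) (hf' : ∀ t ∈ D, f' t ≤ C)
    {x y : ℝ} (hx : x ∈ D) (hy : y ∈ D) (hxy : x ≤ y) : f y - f x ≤ C * (y - x) :=
  hD.image_sub_le_mul_sub_of_deriv_le (fun t ht ↦ (hf t ht).continuousAt.continuousWithinAt)
    (fun t ht ↦ (hf t (interior_subset ht)).differentiableAt.differentiableWithinAt)
    (fun t ht ↦ (hf t (interior_subset ht)).deriv ▸ hf' t (interior_subset ht)) x hx y hy hxy

lemma norm_le_norm_of_norm_sub_le {E : Type*} [NormedAddCommGroup E] [NormedSpace ℝ E]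
    {f g : ℝ → E} {f' g' : E} {s t : ℝ} (hf : HasDerivAt f f' t) (hg : HasDerivAt g g' s)
    (h : ∀ δ > 0, ‖f (t + δ) - f t‖ ≤ ‖g (s + δ) - g s‖) : ‖f'‖ ≤ ‖g'‖ := by
  refine le_of_tendsto_of_tendsto hf.tendsto_slope_zero_right.norm
    hg.tendsto_slope_zero_right.norm ?_
  filter_upwards [self_mem_nhdsWithin] with δ hδ
  simp only [norm_smul]
  exact mul_le_mul_of_nonneg_left (h δ hδ) (norm_nonneg _)

section Flow

variable {H : Type*} [NormedAddCommGroup H] [InnerProductSpace ℝ H] {F : H → H} {α β : ℝ}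

lemma inner_sub_nonneg_of_cocoercive (hβ : 0 ≤ β)
    (hcoco : ∀ z₁ z₂ : H, β * ‖F z₁ - F z₂‖ ^ 2 ≤ ⟪F z₁ - F z₂, z₁ - z₂⟫) (z₁ z₂ : H) :
    0 ≤ ⟪F z₁ - F z₂, z₁ - z₂⟫ :=
  (by positivity : 0 ≤ β * ‖F z₁ - F z₂‖ ^ 2).trans (hcoco z₁ z₂)

lemma norm_sub_le_of_monotone_flow (hF : ∀ z₁ z₂ : H, 0 ≤ ⟪F z₁ - F z₂, z₁ - z₂⟫) (hα : 0 ≤ α)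
    {ζ η : ℝ → H} (hζ : ∀ t : ℝ, 0 ≤ t → HasDerivAt ζ (-α • F (ζ t)) t)
    (hη : ∀ t : ℝ, 0 ≤ t → HasDerivAt η (-α • F (η t)) t) {s t : ℝ} (hs : 0 ≤ s)
    (hst : s ≤ t) : ‖ζ t - η t‖ ≤ ‖ζ s - η s‖ := by
  have hderiv : ∀ u ∈ Ici (0 : ℝ), HasDerivAt (fun u ↦ ‖ζ u - η u‖ ^ 2)
      (-(2 * α) * ⟪F (ζ u) - F (η u), ζ u - η u⟫) u := fun u hu ↦ by
    convert ((hζ u hu).fun_sub (hη u hu)).norm_sq using 1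
    rw [← smul_sub, real_inner_smul_right, real_inner_comm]
    ring
  have hsq := (convex_Ici 0).sub_le_mul_sub_of_hasDerivAt_le hderiv
    (fun u _ ↦ mul_nonpos_of_nonpos_of_nonneg (by linarith) (hF _ _)) hs (hs.trans hst) hst
  rw [zero_mul, sub_nonpos] at hsq
  exact (pow_le_pow_iff_left₀ (norm_nonneg _) (norm_nonneg _) two_ne_zero).1 hsq

lemma norm_apply_le_of_monotone_flow (hF : ∀ z₁ z₂ : H, 0 ≤ ⟪F z₁ - F z₂, z₁ - z₂⟫)
    (hα : 0 < α) {ζ : ℝ → H} (hζ : ∀ t : ℝ, 0 ≤ t → HasDerivAt ζ (-α • F (ζ t)) t) {s t : ℝ}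
    (hs : 0 ≤ s) (hst : s ≤ t) : ‖F (ζ t)‖ ≤ ‖F (ζ s)‖ := by
  have hshift (δ : ℝ) (hδ : 0 < δ) (u : ℝ) (hu : 0 ≤ u) :
      HasDerivAt (fun u ↦ ζ (u + δ)) (-α • F (ζ (u + δ))) u :=
    (hζ (u + δ) (by linarith)).comp_add_const u δ
  have hspeed : ‖-α • F (ζ t)‖ ≤ ‖-α • F (ζ s)‖ :=
    norm_le_norm_of_norm_sub_le (hζ t (hs.trans hst)) (hζ s hs) fun δ hδ ↦
      norm_sub_le_of_monotone_flow hF hα.le (hshift δ hδ) hζ hs hst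
  simp only [norm_smul, norm_neg, Real.norm_of_nonneg hα.le] at hspeed
  exact le_of_mul_le_mul_left hspeed hα

lemma mul_sq_norm_apply_le_of_cocoercive_flow (hα : 0 < α) (hβ : 0 ≤ β)
    (hcoco : ∀ z₁ z₂ : H, β * ‖F z₁ - F z₂‖ ^ 2 ≤ ⟪F z₁ - F z₂, z₁ - z₂⟫)
    {zstar : H} (hzstar : F zstar = 0) {ζ : ℝ → H}
    (hζ : ∀ t : ℝ, 0 ≤ t → HasDerivAt ζ (-α • F (ζ t)) t) {t : ℝ} (ht : 0 ≤ t) :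
    2 * α * β * t * ‖F (ζ t)‖ ^ 2 ≤ ‖ζ 0 - zstar‖ ^ 2 := by
  have hderiv : ∀ u ∈ Icc 0 t, HasDerivAt (‖ζ · - zstar‖ ^ 2)
      (-(2 * α) * ⟪F (ζ u) - F zstar, ζ u - zstar⟫) u := fun u hu ↦ by
    convert ((hζ u hu.1).sub_const zstar).norm_sq using 1
    rw [hzstar, sub_zero, real_inner_smul_right, real_inner_comm]
    ring
  have hbound : ∀ u ∈ Icc 0 t,
      -(2 * α) * ⟪F (ζ u) - F zstar, ζ u - zstar⟫ ≤ -(2 * α * β * ‖F (ζ t)‖ ^ 2) := by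
    intro u hu
    have hcoco_u := hcoco (ζ u) zstar
    have hmono := norm_apply_le_of_monotone_flow (inner_sub_nonneg_of_cocoercive hβ hcoco) hα hζ
      hu.1 hu.2
    rw [hzstar, sub_zero] at hcoco_u ⊢
    have : β * ‖F (ζ t)‖ ^ 2 ≤ β * ‖F (ζ u)‖ ^ 2 := by gcongr
    nlinarith
  have := (convex_Icc 0 t).sub_le_mul_sub_of_hasDerivAt_le hderiv hbound
    (left_mem_Icc.2 ht) (right_mem_Icc.2 ht) ht
  nlinarith [sq_nonneg ‖ζ t - zstar‖]

end Flow

/-- For a `β`-cocoercive map `F` with `F z⋆ = 0` and the flow `ζ' = −α F(ζ)`,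
the function `t ↦ ‖F(ζ(t))‖` is nonincreasing and
`‖F(ζ(t))‖² ≤ ‖ζ(0) − z⋆‖²/(2αβt)` for all `t > 0`. -/
theorem stmt_17 {H : Type*} [NormedAddCommGroup H] [InnerProductSpace ℝ H]
    (F : H → H) (α β : ℝ) (hα : 0 < α) (hβ : 0 < β)
    (hcoco : ∀ z₁ z₂ : H, β * ‖F z₁ - F z₂‖ ^ 2 ≤ ⟪F z₁ - F z₂, z₁ - z₂⟫)
    (zstar : H) (hzstar : F zstar = 0)
    (ζ : ℝ → H) (hζ : ∀ t : ℝ, 0 ≤ t → HasDerivAt ζ (-α • F (ζ t)) t) :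
    (∀ s t : ℝ, 0 ≤ s → s ≤ t → ‖F (ζ t)‖ ≤ ‖F (ζ s)‖) ∧
    (∀ t : ℝ, 0 < t → ‖F (ζ t)‖ ^ 2 ≤ ‖ζ 0 - zstar‖ ^ 2 / (2 * α * β * t)) := by
  refine ⟨fun s t hs hst ↦
    norm_apply_le_of_monotone_flow (inner_sub_nonneg_of_cocoercive hβ.le hcoco) hα hζ hs hst,
    fun t ht ↦ ?_⟩
  rw [le_div_iff₀ (by positivity), mul_comm]
  exact mul_sq_norm_apply_le_of_cocoercive_flow hα hβ.le hcoco hzstar hζ ht.le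
end

section
/- Let H be a real inner product space, let G : H → H be monotone with G(z_⋆) = 0, and let γ ≥ 1. Let z : [0,∞) → H be continuous, continuously differentiable on (0,∞) with z(0) = z₀, suppose g(t) := G(z(t)) is differentiable on (0,∞), suppose ż(t) = −g(t) + (γ/t)(z₀ − z(t)) for all t > 0, and suppose t²‖ż(t)‖² → 0 as t → 0⁺. Then for every t > 0, ‖g(t)‖² ≤ (4γ²/t²) ‖z₀ − z_⋆‖². -/
open scoped RealInnerProductSpace
open Filter Topology

/-- Barrier lemma: if `E` has derivative `D` on `(0,∞)`, `D t ≤ 0` whenever `E t ≥ 0`,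
and `E → 0` as `t → 0⁺`, then `E ≤ 0` on `(0,∞)`. -/
lemma barrier_aux {E D : ℝ → ℝ}
    (hE' : ∀ t : ℝ, 0 < t → HasDerivAt E (D t) t)
    (hcond : ∀ t : ℝ, 0 < t → 0 ≤ E t → D t ≤ 0)
    (h0 : Tendsto E (𝓝[>] (0 : ℝ)) (𝓝 0)) :
    ∀ t : ℝ, 0 < t → E t ≤ 0 := by
  intro t₁ ht₁
  by_contra hE1
  push_neg at hE1
  set ε := E t₁ / 2 with hε
  have hε0 : 0 < ε := by positivity
  have h1 : ∀ᶠ t in 𝓝[>] (0 : ℝ), E t < ε := h0.eventually (gt_mem_nhds hε0)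
  have h2 : Set.Ioo (0 : ℝ) t₁ ∈ 𝓝[>] (0 : ℝ) :=
    Ioo_mem_nhdsGT_of_mem ⟨le_refl 0, ht₁⟩
  obtain ⟨t₀, hEt₀, ht₀⟩ := (h1.and (eventually_of_mem h2 (fun x hx => hx))).exists
  -- the set where E ≤ ε
  set S : Set ℝ := {u : ℝ | u ∈ Set.Icc t₀ t₁ ∧ E u ≤ ε} with hS
  have hcontE : ContinuousOn E (Set.Icc t₀ t₁) := by
    intro u hu
    exact ((hE' u (lt_of_lt_of_le ht₀.1 hu.1)).continuousAt).continuousWithinAt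
  have hSclosed : IsClosed S := by
    have : S = Set.Icc t₀ t₁ ∩ E ⁻¹' Set.Iic ε := rfl
    rw [this]
    exact hcontE.preimage_isClosed_of_isClosed isClosed_Icc isClosed_Iic
  have hScomp : IsCompact S :=
    isCompact_Icc.of_isClosed_subset hSclosed (fun u hu => hu.1)
  have hSne : S.Nonempty := ⟨t₀, ⟨le_refl _, le_of_lt ht₀.2⟩, le_of_lt hEt₀⟩
  set s := sSup S with hs
  have hsmem : s ∈ S := hScomp.sSup_mem hSne
  have hst₀ : t₀ ≤ s := hsmem.1.1
  have hs0 : 0 < s := lt_of_lt_of_le ht₀.1 hst₀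
  have hst₁ : s < t₁ := by
    rcases lt_or_eq_of_le hsmem.1.2 with h | h
    · exact h
    · exfalso
      have := hsmem.2
      rw [h] at this
      rw [hε] at this
      linarith
  -- on (s, t₁], E > ε
  have hgt : ∀ u : ℝ, s < u → u ≤ t₁ → ε < E u := by
    intro u hsu hut₁
    by_contra hc
    push_neg at hc
    have hu : u ∈ S := ⟨⟨le_trans hst₀ (le_of_lt hsu), hut₁⟩, hc⟩
    have : u ≤ s := le_csSup hScomp.bddAbove hu
    linarith
  have hanti : AntitoneOn E (Set.Icc s t₁) := by
    apply antitoneOn_of_deriv_nonpos (convex_Icc s t₁)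
    · intro u hu
      exact ((hE' u (lt_of_lt_of_le hs0 hu.1)).continuousAt).continuousWithinAt
    · intro u hu
      rw [interior_Icc] at hu
      exact ((hE' u (lt_trans hs0 hu.1)).differentiableAt).differentiableWithinAt
    · intro u hu
      rw [interior_Icc] at hu
      have hu0 : 0 < u := lt_trans hs0 hu.1
      rw [(hE' u hu0).deriv]
      refine hcond u hu0 ?_
      have := hgt u hu.1 (le_of_lt hu.2)
      linarith
  have : E t₁ ≤ E s :=
    hanti ⟨le_refl s, le_of_lt hst₁⟩ ⟨le_of_lt hst₁, le_refl t₁⟩ (le_of_lt hst₁)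
  have := hsmem.2
  rw [hε] at this
  linarith

set_option maxHeartbeats 1600000 in
/-- Continuous-time anchored dynamics: if `G` is monotone with `G z⋆ = 0`, `γ ≥ 1`,
`z` solves `ż(t) = −G(z(t)) + (γ/t)(z₀ − z(t))` on `(0,∞)` with `z` continuous on `[0,∞)`,
`t ↦ G(z(t))` differentiable on `(0,∞)`, and `t²‖ż(t)‖² → 0` as `t → 0⁺`, then
`‖G(z(t))‖² ≤ (4γ²/t²)‖z₀ − z⋆‖²` for every `t > 0`. -/
theorem stmt_18 {H : Type*} [NormedAddCommGroup H] [InnerProductSpace ℝ H]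
    (G : H → H) (zstar : H) (γ : ℝ) (hγ : 1 ≤ γ)
    (hmono : ∀ z₁ z₂ : H, 0 ≤ ⟪G z₁ - G z₂, z₁ - z₂⟫)
    (hzstar : G zstar = 0)
    (z : ℝ → H)
    (hcont : ContinuousOn z (Set.Ici (0 : ℝ)))
    (hode : ∀ t : ℝ, 0 < t →
      HasDerivAt z (-(G (z t)) + (γ / t) • (z 0 - z t)) t)
    (hgdiff : ∀ t : ℝ, 0 < t → DifferentiableAt ℝ (fun s => G (z s)) t)
    (hlim : Tendsto (fun t : ℝ => t ^ 2 * ‖-(G (z t)) + (γ / t) • (z 0 - z t)‖ ^ 2)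
      (𝓝[>] (0 : ℝ)) (𝓝 0)) :
    ∀ t : ℝ, 0 < t → ‖G (z t)‖ ^ 2 ≤ 4 * γ ^ 2 / t ^ 2 * ‖z 0 - zstar‖ ^ 2 := by
  have hγ0 : (0 : ℝ) < γ := lt_of_lt_of_le one_pos hγ
  set g : ℝ → H := fun t => G (z t) with hgdef
  set v : ℝ → H := fun t => -(g t) + (γ / t) • (z 0 - z t) with hvdef
  have hode' : ∀ t : ℝ, 0 < t → HasDerivAt z (v t) t := hode
  have hlim' : Tendsto (fun t : ℝ => t ^ 2 * ‖v t‖ ^ 2) (𝓝[>] (0 : ℝ)) (𝓝 0) := hlim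
  set gd : ℝ → H := fun t => deriv g t with hgddef
  have hgd : ∀ t : ℝ, 0 < t → HasDerivAt g (gd t) t := fun t ht => (hgdiff t ht).hasDerivAt
  -- vector identity t•v + t•g = γ•(z 0 - z t)
  have hvec : ∀ t : ℝ, 0 < t → γ • (z 0 - z t) = t • v t + t • g t := by
    intro t ht
    have h : t • ((γ / t) • (z 0 - z t)) = γ • (z 0 - z t) := by
      rw [smul_smul]
      congr 1
      field_simp
    simp only [hvdef, smul_add, smul_neg, h]
    abel
  -- monotonicity along the trajectory
  have hip : ∀ t : ℝ, 0 < t → 0 ≤ ⟪gd t, v t⟫ := by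
    intro t ht
    have h1 : Tendsto (slope g t) (𝓝[≠] t) (𝓝 (gd t)) :=
      hasDerivAt_iff_tendsto_slope.mp (hgd t ht)
    have h2 : Tendsto (slope z t) (𝓝[≠] t) (𝓝 (v t)) :=
      hasDerivAt_iff_tendsto_slope.mp (hode' t ht)
    have h3 : Tendsto (fun s => ⟪slope g t s, slope z t s⟫) (𝓝[≠] t) (𝓝 ⟪gd t, v t⟫) :=
      h1.inner h2
    refine ge_of_tendsto h3 ?_
    filter_upwards [self_mem_nhdsWithin] with s hs
    rw [slope_def_module, slope_def_module, real_inner_smul_left, real_inner_smul_right,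
      ← mul_assoc]
    exact mul_nonneg (mul_self_nonneg _) (hmono (z s) (z t))
  -- inner product relations from the ODE
  have hrel1 : ∀ t : ℝ, 0 < t →
      γ * ⟪g t, z t - z 0⟫ = -(t * ⟪g t, v t⟫ + t * ⟪g t, g t⟫) := by
    intro t ht
    have h := congrArg (fun w => ⟪g t, w⟫) (hvec t ht)
    simp only [inner_add_right, real_inner_smul_right] at h
    have h2 : ⟪g t, z t - z 0⟫ = -⟪g t, z 0 - z t⟫ := by
      rw [← inner_neg_right, neg_sub]
    rw [h2]
    linear_combination -h
  have hrel2 : ∀ t : ℝ, 0 < t →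
      γ * ⟪gd t, z t - z 0⟫ = -(t * ⟪gd t, v t⟫ + t * ⟪gd t, g t⟫) := by
    intro t ht
    have h := congrArg (fun w => ⟪gd t, w⟫) (hvec t ht)
    simp only [inner_add_right, real_inner_smul_right] at h
    have h2 : ⟪gd t, z t - z 0⟫ = -⟪gd t, z 0 - z t⟫ := by
      rw [← inner_neg_right, neg_sub]
    rw [h2]
    linear_combination -h
  -- the Lyapunov-type function and its derivative
  set E : ℝ → ℝ := fun t => t ^ 2 * ⟪g t, g t⟫ + 2 * γ * (t * ⟪g t, z t - z 0⟫) with hEdef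
  set D : ℝ → ℝ := fun t => -(2 * t ^ 2 * ⟪gd t, v t⟫) + 2 * (γ - 1) * (t * ⟪g t, v t⟫)
    with hDdef
  have hE' : ∀ t : ℝ, 0 < t → HasDerivAt E (D t) t := by
    intro t ht
    have hz' := hode' t ht
    have hg' := hgd t ht
    have hA : HasDerivAt (fun s => ⟪g s, g s⟫) (⟪g t, gd t⟫ + ⟪gd t, g t⟫) t :=
      hg'.inner ℝ hg'
    have hB : HasDerivAt (fun s => ⟪g s, z s - z 0⟫) (⟪g t, v t⟫ + ⟪gd t, z t - z 0⟫) t :=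
      hg'.inner ℝ (hz'.sub_const (z 0))
    have h1 : HasDerivAt (fun s : ℝ => s ^ 2) (2 * t) t := by
      simpa using hasDerivAt_pow 2 t
    have h2 : HasDerivAt (fun s : ℝ => s) 1 t := hasDerivAt_id t
    have hsum := (h1.mul hA).add ((h2.mul hB).const_mul (2 * γ))
    have heq : D t = 2 * t * ⟪g t, g t⟫ + t ^ 2 * (⟪g t, gd t⟫ + ⟪gd t, g t⟫) +
        2 * γ * (1 * ⟪g t, z t - z 0⟫ + t * (⟪g t, v t⟫ + ⟪gd t, z t - z 0⟫)) := by
      have r1 := hrel1 t ht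
      have r2 := hrel2 t ht
      have rc : ⟪g t, gd t⟫ = ⟪gd t, g t⟫ := real_inner_comm _ _
      simp only [hDdef]
      linear_combination (-2) * r1 + (-2 * t) * r2 + (-t ^ 2) * rc
    rw [heq]
    exact hsum
  -- conditional sign of the derivative
  have hcond : ∀ t : ℝ, 0 < t → 0 ≤ E t → D t ≤ 0 := by
    intro t ht hE
    simp only [hEdef] at hE
    simp only [hDdef]
    have r1 := hrel1 t ht
    have hgg : (0 : ℝ) ≤ ⟪g t, g t⟫ := real_inner_self_nonneg
    have hgv : ⟪g t, v t⟫ ≤ 0 := by nlinarith [mul_pos ht ht]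
    have h1 := hip t ht
    have h2 : 0 ≤ (γ - 1) * t * (-⟪g t, v t⟫) :=
      mul_nonneg (mul_nonneg (by linarith) (le_of_lt ht)) (by linarith)
    nlinarith [mul_nonneg (mul_nonneg (by norm_num : (0:ℝ) ≤ 2) (sq_nonneg t)) h1]
  -- limits as t → 0⁺
  have hzlim : Tendsto z (𝓝[>] (0 : ℝ)) (𝓝 (z 0)) :=
    ((hcont 0 Set.self_mem_Ici).mono_left (nhdsWithin_mono 0 Set.Ioi_subset_Ici_self))
  have hvlim : Tendsto (fun t => t • v t) (𝓝[>] (0 : ℝ)) (𝓝 0) := by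
    have h1 : Tendsto (fun t => ‖t • v t‖ ^ 2) (𝓝[>] (0 : ℝ)) (𝓝 0) := by
      refine hlim'.congr' ?_
      filter_upwards [self_mem_nhdsWithin] with t ht
      rw [norm_smul, Real.norm_eq_abs, abs_of_pos ht, mul_pow]
    have h2 : Tendsto (fun t => ‖t • v t‖) (𝓝[>] (0 : ℝ)) (𝓝 0) := by
      have h3 := h1.sqrt
      simp only [Real.sqrt_zero] at h3
      refine h3.congr fun t => ?_
      rw [Real.sqrt_sq (norm_nonneg _)]
    exact tendsto_zero_iff_norm_tendsto_zero.mpr h2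
  have hulim : Tendsto (fun t => t • g t) (𝓝[>] (0 : ℝ)) (𝓝 0) := by
    have h : Tendsto (fun t => γ • (z 0 - z t) - t • v t) (𝓝[>] (0 : ℝ))
        (𝓝 (γ • (z 0 - z 0) - 0)) :=
      ((tendsto_const_nhds.sub hzlim).const_smul γ).sub hvlim
    have h' : Tendsto (fun t => γ • (z 0 - z t) - t • v t) (𝓝[>] (0 : ℝ)) (𝓝 0) := by
      simpa using h
    refine h'.congr' ?_
    filter_upwards [self_mem_nhdsWithin] with t ht
    rw [hvec t ht]
    abel
  have hElim : Tendsto E (𝓝[>] (0 : ℝ)) (𝓝 0) := by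
    have h1 : Tendsto (fun t => ⟪t • g t, t • g t⟫ + 2 * γ * ⟪t • g t, z t - z 0⟫)
        (𝓝[>] (0 : ℝ)) (𝓝 (⟪(0 : H), (0 : H)⟫ + 2 * γ * ⟪(0 : H), z 0 - z 0⟫)) :=
      (hulim.inner hulim).add ((hulim.inner (hzlim.sub_const (z 0))).const_mul (2 * γ))
    have h2 : Tendsto (fun t => ⟪t • g t, t • g t⟫ + 2 * γ * ⟪t • g t, z t - z 0⟫)
        (𝓝[>] (0 : ℝ)) (𝓝 0) := by
      simpa using h1
    refine h2.congr fun t => ?_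
    simp only [hEdef, real_inner_smul_left, real_inner_smul_right]
    ring
  -- the main bound E ≤ 0
  have hmain : ∀ t : ℝ, 0 < t → E t ≤ 0 := barrier_aux hE' hcond hElim
  -- conclusion
  intro t ht
  have hEt : E t ≤ 0 := hmain t ht
  simp only [hEdef] at hEt
  have hR : 0 ≤ ⟪g t, z t - zstar⟫ := by
    have h := hmono (z t) zstar
    rwa [hzstar, sub_zero] at h
  have hsplit : ⟪g t, z t - z 0⟫ = ⟪g t, z t - zstar⟫ - ⟪g t, z 0 - zstar⟫ := by
    rw [← inner_sub_right]
    congr 1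
    abel
  have hCS : ⟪g t, z 0 - zstar⟫ ≤ ‖g t‖ * ‖z 0 - zstar‖ := real_inner_le_norm _ _
  have hgg : ⟪g t, g t⟫ = ‖g t‖ ^ 2 := real_inner_self_eq_norm_sq _
  have key : t ^ 2 * ‖g t‖ ^ 2 ≤ 2 * γ * t * (‖g t‖ * ‖z 0 - zstar‖) := by
    rw [hsplit, hgg] at hEt
    have hpos : (0:ℝ) ≤ 2 * γ * t := by positivity
    have hA2 : 0 ≤ 2 * γ * t * (‖g t‖ * ‖z 0 - zstar‖ - ⟪g t, z 0 - zstar⟫) :=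
      mul_nonneg hpos (by linarith)
    have hB2 : 0 ≤ 2 * γ * t * ⟪g t, z t - zstar⟫ := mul_nonneg hpos hR
    nlinarith [hA2, hB2]
  have hX : 0 ≤ t * ‖g t‖ := mul_nonneg (le_of_lt ht) (norm_nonneg _)
  have hc : 0 ≤ 2 * γ * ‖z 0 - zstar‖ :=
    mul_nonneg (by linarith) (norm_nonneg _)
  have hXc : t * ‖g t‖ ≤ 2 * γ * ‖z 0 - zstar‖ := by
    rcases eq_or_lt_of_le hX with h | h
    · linarith
    · have h1 : (t * ‖g t‖) * (t * ‖g t‖) ≤ (2 * γ * ‖z 0 - zstar‖) * (t * ‖g t‖) := by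
        nlinarith [key]
      exact le_of_mul_le_mul_right h1 h
  have hfin : (t * ‖g t‖) ^ 2 ≤ (2 * γ * ‖z 0 - zstar‖) ^ 2 := by
    exact pow_le_pow_left₀ hX hXc 2
  rw [div_mul_eq_mul_div, le_div_iff₀ (by positivity)]
  linarith [hfin]
end

section
/- Let G : ℝ^d → ℝ^d be monotone and R-Lipschitz, let z_⋆ satisfy G(z_⋆) = 0, let β > 0, and consider the iteration z_{k+1} = z_k − G(z_k) − β(G(z_k) − G(z_{k−1})) for k ≥ 0 (SimGD-O with unit learning rate). Writing g_k = G(z_k), for every k ≥ 0: ‖z_{k+1} + β g_k − z_⋆‖² ≤ ‖z_k + β g_{k−1} − z_⋆‖² + 2β²R ‖z_k − z_{k−1}‖² − (2β − 1 − 2β²R) ‖z_{k+1} − z_k‖². -/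
open scoped RealInnerProductSpace

set_option maxHeartbeats 1000000 in
/-- Key descent inequality for SimGD-O with unit learning rate: for monotone `R`-Lipschitz `G`
with `G z⋆ = 0`, `β > 0`, and `z_{k+1} = z_k − G(z_k) − β(G(z_k) − G(z_{k−1}))` (with the
convention `z_{−1} = z₀`), writing `g_k = G(z_k)`,
`‖z_{k+1} + βg_k − z⋆‖² ≤ ‖z_k + βg_{k−1} − z⋆‖² + 2β²R‖z_k − z_{k−1}‖²
  − (2β − 1 − 2β²R)‖z_{k+1} − z_k‖²` for every `k ≥ 0`.
(Here natural-number subtraction gives `z (0 − 1) = z 0`, which is the convention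
`z_{−1} = z₀`.) -/
theorem stmt_19 {d : ℕ} (G : EuclideanSpace ℝ (Fin d) → EuclideanSpace ℝ (Fin d))
    (R β : ℝ) (hR : 0 ≤ R) (hβ : 0 < β)
    (hmono : ∀ z₁ z₂, 0 ≤ ⟪G z₁ - G z₂, z₁ - z₂⟫)
    (hlip : ∀ z₁ z₂, ‖G z₁ - G z₂‖ ≤ R * ‖z₁ - z₂‖)
    (zstar : EuclideanSpace ℝ (Fin d)) (hzstar : G zstar = 0)
    (z : ℕ → EuclideanSpace ℝ (Fin d))
    (hiter : ∀ k : ℕ, z (k + 1) = z k - G (z k) - β • (G (z k) - G (z (k - 1)))) :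
    ∀ k : ℕ,
      ‖z (k + 1) + β • G (z k) - zstar‖ ^ 2
        ≤ ‖z k + β • G (z (k - 1)) - zstar‖ ^ 2
          + 2 * β ^ 2 * R * ‖z k - z (k - 1)‖ ^ 2
          - (2 * β - 1 - 2 * β ^ 2 * R) * ‖z (k + 1) - z k‖ ^ 2 := by
  intro k
  have hlip' : ‖G (z k) - G (z (k - 1))‖ ≤ R * ‖z k - z (k - 1)‖ := hlip _ _
  have hmono' : (0:ℝ) ≤ ⟪G (z k), z k - zstar⟫ := by
    have h := hmono (z k) zstar
    rwa [hzstar, sub_zero] at h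
  set g := G (z k) with hg
  set gp := G (z (k - 1)) with hgp
  set a := z k with ha
  set ap := z (k - 1) with hap
  set s := zstar with hs
  rw [hiter k]
  set e := g - gp with he
  have hb1 : a - g - β • (g - gp) + β • g - s = (a + β • gp - s) - g := by
    module
  have hb2 : a - g - β • (g - gp) - a = -(g + β • e) := by
    rw [he]; module
  rw [hb1, hb2, norm_neg]
  set w := a + β • gp - s with hw
  -- expand norms
  have hA : ‖w - g‖ ^ 2 = ‖w‖ ^ 2 - 2 * ⟪w, g⟫ + ‖g‖ ^ 2 := norm_sub_sq_real w g
  have hwg : ⟪w, g⟫ = ⟪a - s, g⟫ + β * ⟪gp, g⟫ := by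
    have hw' : w = (a - s) + β • gp := by rw [hw]; module
    rw [hw', inner_add_left, real_inner_smul_left]
  have hC : ‖g + β • e‖ ^ 2 = ‖g‖ ^ 2 + 2 * (β * ⟪g, e⟫) + β ^ 2 * ‖e‖ ^ 2 := by
    rw [norm_add_sq_real, real_inner_smul_right, norm_smul, Real.norm_eq_abs,
      abs_of_pos hβ]
    ring
  have hge : ⟪g, e⟫ = ‖g‖ ^ 2 - ⟪gp, g⟫ := by
    rw [he, inner_sub_right, real_inner_self_eq_norm_sq, real_inner_comm]
  have hde : ⟪g + β • e, e⟫ = ⟪g, e⟫ + β * ‖e‖ ^ 2 := by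
    rw [inner_add_left, real_inner_smul_left, real_inner_self_eq_norm_sq]
  have hcauchy : ⟪g + β • e, e⟫ ≤ ‖g + β • e‖ * ‖e‖ := real_inner_le_norm _ _
  have hmono'' : (0:ℝ) ≤ ⟪a - s, g⟫ := by rwa [real_inner_comm]
  have hXnn : (0:ℝ) ≤ ‖g + β • e‖ := norm_nonneg _
  have hEnn : (0:ℝ) ≤ ‖e‖ := norm_nonneg _
  have hPnn : (0:ℝ) ≤ ‖a - ap‖ := norm_nonneg _
  -- X*E ≤ X*(R*P)
  have hXE : ‖g + β • e‖ * ‖e‖ ≤ ‖g + β • e‖ * (R * ‖a - ap‖) :=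
    mul_le_mul_of_nonneg_left hlip' hXnn
  nlinarith [mul_nonneg (mul_nonneg (sq_nonneg β) hR) (sq_nonneg (‖g + β • e‖ - ‖a - ap‖)),
    mul_le_mul_of_nonneg_left hcauchy (le_of_lt (by positivity : (0:ℝ) < 4 * β ^ 2)),
    mul_le_mul_of_nonneg_left hXE (le_of_lt (by positivity : (0:ℝ) < 4 * β ^ 2)),
    mul_nonneg (mul_nonneg hβ.le hβ.le) (sq_nonneg ‖e‖),
    mul_nonneg (mul_nonneg (mul_nonneg hβ.le hβ.le) hβ.le) (sq_nonneg ‖e‖),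
    hmono'', hβ, hR]
end
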